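/- arXiv:math/0606393 — 11 statements merged into one kernel-verified Lean document; each statement's English description precedes it below -/
import Mathlib

section
/- Let B be a bicategory, let i : X ⟶ Y and r : Y ⟶ X be 1-cells, and let ε : i ∘ r ⟶ 𝟙_Y be a 2-cell (where i ∘ r denotes the composite 1-cell Y → X → Y). Suppose that the whiskered 2-cells r ∘ ε : r ∘ (i ∘ r) ⟶ r and ε ∘ i : (i ∘ r) ∘ i ⟶ i are invertible (modulo the associativity and unitor constraints of B), and that there exists an invertible 2-cell 𝟙_X ≅ r ∘ i. Then there is an adjunction i ⊣ r in the bicategory B whose counit is ε and whose unit is an invertible 2-cell. -/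
/-!
For an invertible 2-cell `η : 𝟙 ≅ f ≫ g`, the left zigzag of `(η, ε)` is `η ▷ f` followed by the
invertible `f ◁ ε`, so it is invertible, and correcting `η` by its inverse (whiskered by `g`)
gives an invertible unit satisfying the left triangle identity. The right zigzag is then
invertible, being built from `g ◁ η` and `ε ▷ g`, and idempotent, because the left triangle
holds; an invertible idempotent is the identity, which is the right triangle identity.
-/

open CategoryTheory CategoryTheory.Bicategory

namespace CategoryTheory.Bicategory

-- `ε` itself is taken by the scoped comonad-counit notation of this namespace.
variable {B : Type*} [Bicategory B] {a b : B} {f : a ⟶ b} {g : b ⟶ a}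

lemma leftZigzag_comp_whiskerRight (η : 𝟙 a ⟶ f ≫ g) (ε' : g ≫ f ⟶ 𝟙 b) (φ : f ⟶ f) :
    leftZigzag (η ≫ φ ▷ g) ε' = leftZigzag η ε' ≫ φ ▷ 𝟙 b := by
  calc
    _ = η ▷ f ⊗≫ (φ ▷ (g ≫ f) ≫ f ◁ ε') ⊗≫ 𝟙 _ := by bicategory
    _ = η ▷ f ⊗≫ (f ◁ ε' ≫ φ ▷ 𝟙 b) ⊗≫ 𝟙 _ := by rw [← whisker_exchange]
    _ = _ := by bicategory

instance isIso_leftZigzag (η : 𝟙 a ⟶ f ≫ g) (ε' : g ≫ f ⟶ 𝟙 b) [IsIso η] [IsIso (f ◁ ε')] :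
    IsIso (leftZigzag η ε') := by
  have : leftZigzag η ε' = η ▷ f ≫ (α_ f g f).hom ≫ f ◁ ε' := by bicategory
  rw [this]
  infer_instance

instance isIso_rightZigzag (η : 𝟙 a ⟶ f ≫ g) (ε' : g ≫ f ⟶ 𝟙 b) [IsIso η] [IsIso (ε' ▷ g)] :
    IsIso (rightZigzag η ε') := by
  have : rightZigzag η ε' = g ◁ η ≫ (α_ g f g).inv ≫ ε' ▷ g := by bicategory
  rw [this]
  infer_instance

theorem right_triangle_of_left_triangle_of_isIso (η : 𝟙 a ⟶ f ≫ g) (ε' : g ≫ f ⟶ 𝟙 b)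
    [IsIso (rightZigzag η ε')] (h : leftZigzag η ε' = (λ_ f).hom ≫ (ρ_ f).inv) :
    rightZigzag η ε' = (ρ_ g).hom ≫ (λ_ g).inv := by
  rw [← cancel_epi (rightZigzag η ε' ≫ (λ_ g).hom ≫ (ρ_ g).inv)]
  calc
    _ = rightZigzag η ε' ⊗≫ rightZigzag η ε' := by bicategory
    _ = rightZigzag η ε' := rightZigzag_idempotent_of_left_triangle η ε' h
    _ = _ := by simp

noncomputable def adjointifyUnit (η : 𝟙 a ⟶ f ≫ g) (ε' : g ≫ f ⟶ 𝟙 b)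
    [IsIso (leftZigzag η ε')] : 𝟙 a ⟶ f ≫ g :=
  η ≫ inv ((λ_ f).inv ≫ leftZigzag η ε' ≫ (ρ_ f).hom) ▷ g

instance isIso_adjointifyUnit (η : 𝟙 a ⟶ f ≫ g) (ε' : g ≫ f ⟶ 𝟙 b) [IsIso η]
    [IsIso (leftZigzag η ε')] : IsIso (adjointifyUnit η ε') := by
  unfold adjointifyUnit
  infer_instance

theorem adjointifyUnit_left_triangle (η : 𝟙 a ⟶ f ≫ g) (ε' : g ≫ f ⟶ 𝟙 b)
    [IsIso (leftZigzag η ε')] :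
    leftZigzag (adjointifyUnit η ε') ε' = (λ_ f).hom ≫ (ρ_ f).inv := by
  rw [adjointifyUnit, leftZigzag_comp_whiskerRight, whiskerRight_id]
  simp

noncomputable def Adjunction.ofIsIsoWhiskerCounit (η : 𝟙 a ≅ f ≫ g) (ε' : g ≫ f ⟶ 𝟙 b)
    [IsIso (ε' ▷ g)] [IsIso (f ◁ ε')] : f ⊣ g where
  unit := adjointifyUnit η.hom ε'
  counit := ε'
  left_triangle := adjointifyUnit_left_triangle η.hom ε'
  right_triangle := right_triangle_of_left_triangle_of_isIso _ ε'
    (adjointifyUnit_left_triangle η.hom ε')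

end CategoryTheory.Bicategory

/-- In a bicategory `B`, given 1-cells `i : X ⟶ Y`, `r : Y ⟶ X` and a
2-cell `ε : r ≫ i ⟶ 𝟙 Y` (in the paper's notation, `ε : i ∘ r ⟹ 1_Y`), if the whiskerings
`ε ▷ r` (the paper's `rε`) and `i ◁ ε` (the paper's `εi`) are invertible and there exists an
invertible 2-cell `𝟙 X ≅ i ≫ r`, then there is an adjunction `i ⊣ r` in `B` whose counit is
`ε` and whose unit is invertible. -/
theorem stmt0 {B : Type*} [Bicategory B] {X Y : B} (i : X ⟶ Y) (r : Y ⟶ X)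
    (ε' : r ≫ i ⟶ 𝟙 Y) (h₁ : IsIso (ε' ▷ r)) (h₂ : IsIso (i ◁ ε'))
    (h₃ : Nonempty (𝟙 X ≅ i ≫ r)) :
    ∃ adj : Bicategory.Adjunction i r, adj.counit = ε' ∧ IsIso adj.unit := by
  obtain ⟨σ⟩ := h₃
  exact ⟨Bicategory.Adjunction.ofIsIsoWhiskerCounit σ ε', rfl, isIso_adjointifyUnit σ.hom ε'⟩
end

section
/- If (d, E, c) is a two-sided discrete fibration from A to B, then d : E ⥤ A is a Grothendieck fibration and c : E ⥤ B is a Grothendieck opfibration. -/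
open CategoryTheory

universe w v v₁ v₂ v₃ v₄ v₅ u u₁ u₂ u₃ u₄ u₅

/-- A morphism is "an identity" when it is an `eqToHom` of an equality of objects. -/
def IsIdentityHom {C : Type u₁} [Category.{v₁} C] {x y : C} (φ : x ⟶ y) : Prop :=
  ∃ h : x = y, φ = eqToHom h

/-- A morphism `α : e₁ ⟶ e₂` is `p`-cartesian when every `α₁ : e₃ ⟶ e₂` together with a
factorisation `p.map α₁ = β ≫ p.map α` lifts uniquely through `α`. -/
def IsCartesianHom {E : Type u₁} {B : Type u₂} [Category.{v₁} E] [Category.{v₂} B]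
    (p : E ⥤ B) {e₁ e₂ : E} (α : e₁ ⟶ e₂) : Prop :=
  ∀ (e₃ : E) (α₁ : e₃ ⟶ e₂) (β : p.obj e₃ ⟶ p.obj e₁),
    p.map α₁ = β ≫ p.map α → ∃! γ : e₃ ⟶ e₁, p.map γ = β ∧ γ ≫ α = α₁

/-- A functor `p : E ⥤ B` is a Grothendieck fibration when every morphism
`β : b ⟶ p.obj e` admits a `p`-cartesian lift with codomain `e`. -/
def IsGrothendieckFibration {E : Type u₁} {B : Type u₂} [Category.{v₁} E] [Category.{v₂} B]
    (p : E ⥤ B) : Prop :=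
  ∀ (e : E) (b : B) (β : b ⟶ p.obj e),
    ∃ (e' : E) (α : e' ⟶ e) (h : b = p.obj e'),
      IsCartesianHom p α ∧ eqToHom h ≫ p.map α = β

/-- A functor is a Grothendieck opfibration when its opposite is a Grothendieck fibration. -/
def IsGrothendieckOpfibration {E : Type u₁} {B : Type u₂} [Category.{v₁} E] [Category.{v₂} B]
    (p : E ⥤ B) : Prop :=
  IsGrothendieckFibration p.op

/-- A span of functors `A ⟵d E ⟶c B` is a two-sided discrete fibration from `A` to `B`:
(i) every `φ : a ⟶ d.obj e` has a unique lift with codomain `e` which is sent by `c` to an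
identity; (ii) every `ψ : c.obj e ⟶ b` has a unique lift with domain `e` which is sent by
`d` to an identity; (iii) every morphism of `E` factors as a morphism sent by `d` to an
identity followed by a morphism sent by `c` to an identity (whence, by (i) and (ii), it is
the lift of its `c`-image followed by the lift of its `d`-image). -/
structure IsTwoSidedDiscreteFibration {A : Type u₁} {E : Type u₂} {B : Type u₃}
    [Category.{v₁} A] [Category.{v₂} E] [Category.{v₃} B]
    (d : E ⥤ A) (c : E ⥤ B) : Prop where
  lift_left : ∀ (e : E) (a : A) (φ : a ⟶ d.obj e),
    ∃! p : Σ e' : E, e' ⟶ e,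
      (∃ h : a = d.obj p.1, φ = eqToHom h ≫ d.map p.2) ∧ IsIdentityHom (c.map p.2)
  lift_right : ∀ (e : E) (b : B) (ψ : c.obj e ⟶ b),
    ∃! p : Σ e' : E, e ⟶ e',
      (∃ h : c.obj p.1 = b, ψ = c.map p.2 ≫ eqToHom h) ∧ IsIdentityHom (d.map p.2)
  factor : ∀ {e₁ e₂ : E} (φ : e₁ ⟶ e₂),
    ∃ (e₃ : E) (u : e₁ ⟶ e₃) (v : e₃ ⟶ e₂),
      φ = u ≫ v ∧ IsIdentityHom (d.map u) ∧ IsIdentityHom (c.map v)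

lemma IsIdentityHom.comp {C : Type u₁} [Category.{v₁} C] {x y z : C} {f : x ⟶ y} {g : y ⟶ z}
    (hf : IsIdentityHom f) (hg : IsIdentityHom g) : IsIdentityHom (f ≫ g) := by
  obtain ⟨h1, rfl⟩ := hf
  obtain ⟨h2, rfl⟩ := hg
  exact ⟨h1.trans h2, eqToHom_trans h1 h2⟩

theorem tsdf_fib {A : Type u₁} {E : Type u₂} {B : Type u₃}
    [Category.{v₁} A] [Category.{v₂} E] [Category.{v₃} B]
    (d : E ⥤ A) (c : E ⥤ B) (hdc : IsTwoSidedDiscreteFibration d c) :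
    IsGrothendieckFibration d := by
  intro e b β
  obtain ⟨⟨e', α⟩, ⟨⟨hb, hβ⟩, hcα⟩, _⟩ := hdc.lift_left e b β
  refine ⟨e', α, hb, ?_, by rw [← hβ]⟩
  intro e₃ α₁ β' hfac
  -- factor α₁ = u ≫ v
  obtain ⟨e₃', u, v, hα₁, hud, hvc⟩ := hdc.factor α₁
  -- lift β' with codomain e'
  obtain ⟨⟨e₄, w⟩, ⟨⟨h₄, hw⟩, hcw⟩, hunw⟩ := hdc.lift_left e' (d.obj e₃) β'
  -- uniqueness of the left lift of d.map α₁ identifies ⟨e₃', v⟩ with ⟨e₄, w ≫ α⟩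
  obtain ⟨hud_h, hud_eq⟩ := hud
  obtain ⟨p₀, _, hun0⟩ := hdc.lift_left e (d.obj e₃) (d.map α₁)
  have h1 : (⟨e₃', v⟩ : Σ e'' : E, e'' ⟶ e) = p₀ := by
    refine hun0 _ ⟨⟨hud_h, ?_⟩, hvc⟩
    rw [hα₁, d.map_comp, hud_eq]
  have h2 : (⟨e₄, w ≫ α⟩ : Σ e'' : E, e'' ⟶ e) = p₀ := by
    refine hun0 _ ⟨⟨h₄, ?_⟩, ?_⟩
    · rw [hfac, hw, d.map_comp, Category.assoc]
    · show IsIdentityHom (c.map (w ≫ α))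
      rw [c.map_comp]; exact hcw.comp hcα
  have h3 : (⟨e₃', v⟩ : Σ e'' : E, e'' ⟶ e) = ⟨e₄, w ≫ α⟩ := h1.trans h2.symm
  injection h3 with heq hheq
  subst heq
  have hv : v = w ≫ α := eq_of_heq hheq
  refine ⟨u ≫ w, ⟨?_, ?_⟩, ?_⟩
  · rw [d.map_comp, hud_eq, hw]
  · rw [Category.assoc, ← hv, ← hα₁]
  · -- uniqueness
    rintro γ' ⟨hγ'd, hγ'α⟩
    obtain ⟨e₅, u', w'', hγ', hud', hwc'⟩ := hdc.factor γ'
    obtain ⟨hud'_h, hud'_eq⟩ := hud'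
    -- w'' is the unique left lift of β' into e'
    have hw2 : (⟨e₅, w''⟩ : Σ e'' : E, e'' ⟶ e') = ⟨_, w⟩ := by
      refine hunw _ ⟨⟨hud'_h, ?_⟩, hwc'⟩
      rw [← hγ'd, hγ', d.map_comp, hud'_eq]
    injection hw2 with heq5 hheq5
    subst heq5
    have hw'' : w'' = w := eq_of_heq hheq5
    -- u' = u via uniqueness of right lift of c.map α₁
    obtain ⟨q₀, _, hunq⟩ := hdc.lift_right e₃ (c.obj e) (c.map α₁)
    obtain ⟨hvc_h, hvc_eq⟩ := hvc
    have hq1 : (⟨_, u⟩ : Σ e'' : E, e₃ ⟶ e'') = q₀ := by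
      refine hunq _ ⟨⟨hvc_h, ?_⟩, ⟨hud_h, hud_eq⟩⟩
      rw [hα₁, c.map_comp, hvc_eq]
    obtain ⟨hcw_h, hcw_eq⟩ := hcw
    obtain ⟨hcα_h, hcα_eq⟩ := hcα
    have hcw_eq' : c.map w = eqToHom hcw_h := hcw_eq
    have hcα_eq' : c.map α = eqToHom hcα_h := hcα_eq
    have hq2 : (⟨_, u'⟩ : Σ e'' : E, e₃ ⟶ e'') = q₀ := by
      refine hunq _ ⟨⟨hcw_h.trans hcα_h, ?_⟩, ⟨hud'_h, hud'_eq⟩⟩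
      rw [← hγ'α, hγ', hw'', Category.assoc, c.map_comp, c.map_comp, hcw_eq', hcα_eq',
        eqToHom_trans]
    have h5 := hq2.trans hq1.symm
    injection h5 with _ h6
    rw [hγ', h6, hw'']

lemma IsIdentityHom.op' {C : Type u₁} [Category.{v₁} C] {x y : C} {f : x ⟶ y}
    (hf : IsIdentityHom f) : IsIdentityHom f.op := by
  obtain ⟨h, rfl⟩ := hf
  subst h
  exact ⟨rfl, by simp⟩

lemma IsIdentityHom.unop' {C : Type u₁} [Category.{v₁} C] {x y : Cᵒᵖ} {f : x ⟶ y}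
    (hf : IsIdentityHom f) : IsIdentityHom f.unop := by
  obtain ⟨h, rfl⟩ := hf
  subst h
  exact ⟨rfl, by simp⟩

theorem tsdf_op {A : Type u₁} {E : Type u₂} {B : Type u₃}
    [Category.{v₁} A] [Category.{v₂} E] [Category.{v₃} B]
    (d : E ⥤ A) (c : E ⥤ B) (hdc : IsTwoSidedDiscreteFibration d c) :
    IsTwoSidedDiscreteFibration c.op d.op where
  lift_left e b φ := by
    obtain ⟨⟨e', α⟩, ⟨⟨h, hφ⟩, hid⟩, hun⟩ := hdc.lift_right e.unop b.unop φ.unop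
    have h' : b = c.op.obj (Opposite.op e') := (congrArg Opposite.op h).symm
    refine ⟨⟨Opposite.op e', α.op⟩, ⟨⟨h', ?_⟩, hid.op'⟩, ?_⟩
    · apply Quiver.Hom.unop_inj
      show φ.unop = c.map α ≫ (eqToHom h').unop
      rw [hφ]
      congr 1
      simp
    · rintro ⟨⟨q1⟩, q2⟩ ⟨⟨hq, hqφ⟩, hqid⟩
      have : (⟨q1, q2.unop⟩ : Σ e'' : E, e.unop ⟶ e'') = ⟨e', α⟩ := by
        refine hun _ ⟨⟨(congrArg Opposite.unop hq).symm, ?_⟩, hqid.unop'⟩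
        · apply Quiver.Hom.op_inj
          show φ = (eqToHom ((congrArg Opposite.unop hq).symm)).op ≫ c.op.map q2
          rw [hqφ]
          congr 1
          simp
      injection this with h1 h2
      subst h1
      have hq2 : q2 = α.op := Quiver.Hom.unop_inj (eq_of_heq h2)
      subst hq2
      rfl
  lift_right e b ψ := by
    obtain ⟨⟨e', α⟩, ⟨⟨h, hφ⟩, hid⟩, hun⟩ := hdc.lift_left e.unop b.unop ψ.unop
    have h' : d.op.obj (Opposite.op e') = b := congrArg Opposite.op h.symm
    refine ⟨⟨Opposite.op e', α.op⟩, ⟨⟨h', ?_⟩, hid.op'⟩, ?_⟩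
    · apply Quiver.Hom.unop_inj
      show ψ.unop = (eqToHom h').unop ≫ d.map α
      rw [hφ]
      congr 1
      simp
    · rintro ⟨⟨q1⟩, q2⟩ ⟨⟨hq, hqφ⟩, hqid⟩
      have : (⟨q1, q2.unop⟩ : Σ e'' : E, e'' ⟶ e.unop) = ⟨e', α⟩ := by
        refine hun _ ⟨⟨congrArg Opposite.unop hq.symm, ?_⟩, hqid.unop'⟩
        · apply Quiver.Hom.op_inj
          show ψ = d.op.map q2 ≫ (eqToHom (congrArg Opposite.unop hq.symm)).op
          rw [hqφ]
          congr 1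
          simp
      injection this with h1 h2
      subst h1
      have hq2 : q2 = α.op := Quiver.Hom.unop_inj (eq_of_heq h2)
      subst hq2
      rfl
  factor := by
    rintro e₁ e₂ φ
    obtain ⟨e₃, u, v, hφ, hu, hv⟩ := hdc.factor φ.unop
    refine ⟨Opposite.op e₃, v.op, u.op, ?_, hv.op', hu.op'⟩
    apply Quiver.Hom.unop_inj
    simpa using hφ

/-- If `(d, E, c)` is a two-sided discrete fibration from `A` to `B`, then
`d` is a Grothendieck fibration and `c` is a Grothendieck opfibration. -/
theorem stmt4 {A : Type u₁} {E : Type u₂} {B : Type u₃}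
    [Category.{v₁} A] [Category.{v₂} E] [Category.{v₃} B]
    (d : E ⥤ A) (c : E ⥤ B) (hdc : IsTwoSidedDiscreteFibration d c) :
    IsGrothendieckFibration d ∧ IsGrothendieckOpfibration c :=
  ⟨tsdf_fib d c hdc, tsdf_fib c.op d.op (tsdf_op d c hdc)⟩
end

section
/- (Yoneda lemma for two-sided discrete fibrations in CAT.) Let f : A ⥤ B be a functor, let (d₁, E₁, c₁) be any span from X to A, and let (d₂, E₂, c₂) be a two-sided discrete fibration from X to B. Let f/B denote the comma category Comma f (𝟭 B) with projections p to A and q to B, and let K denote the composite span (f/B) ∘ E₁ from X to B: its head is the category with objects pairs (e, w) where e is an object of E₁ and w is an object of f/B with p.obj w = c₁.obj e (morphisms defined componentwise with the matching condition), left leg d₁ ∘ pr₁ and right leg q ∘ pr₂. The span f ∘ E₁ (composite of E₁ with the span (𝟭_A, A, f)) is isomorphic to the span with head E₁, legs d₁ and f ∘ c₁, and the canonical span morphism j : f ∘ E₁ → K sends e to (e, (c₁.obj e, f.obj (c₁.obj e), identity)). Then composition with j is a bijection from the set of span morphisms K → E₂ to the set of span morphisms f ∘ E₁ → E₂. -/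
/-!
A span morphism `ψ : E₁ ⥤ E₂` extends along `j` by transport in the fibration: an object
`(e, h : f (c₁ e) ⟶ b)` of `(f/B) ∘ E₁` goes to the codomain of the unique `d₂`-vertical lift at
`ψ e` of `h`, read as a morphism `c₂ (ψ e) = f (c₁ e) ⟶ b`. Thus the extension is the target of a
vertical lift of the natural transformation `c₂ (ψ e) ⟶ b`; such lifts exist and their target is
unique because `E₂` is a two-sided discrete fibration, in which a morphism is determined by its
two images. Conversely, for a span morphism `φ` with `j ⋙ φ = ψ`, applying `φ` to the canonical
morphisms `j e ⟶ (e, h)` exhibits `φ` as such a target, whence uniqueness.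
-/

open CategoryTheory

universe w v v₁ v₂ v₃ v₄ v₅ u u₁ u₂ u₃ u₄ u₅

section StrictPullback

variable {X : Type u₁} {A : Type u₂} {B : Type u₃}
variable [Category.{v₁} X] [Category.{v₂} A] [Category.{v₃} B]

/-- The strict pullback of `g : X ⥤ B` and `f : A ⥤ B`: objects are pairs with equal images. -/
structure StrictPullback (g : X ⥤ B) (f : A ⥤ B) : Type max u₁ u₂ where
  fst : X
  snd : A
  eq : g.obj fst = f.obj snd

namespace StrictPullback

variable {g : X ⥤ B} {f : A ⥤ B}

/-- Morphisms in the strict pullback: pairs of morphisms with equal images,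
modulo the object equalities. -/
@[ext]
structure Hom (P Q : StrictPullback g f) where
  left : P.fst ⟶ Q.fst
  right : P.snd ⟶ Q.snd
  w : g.map left ≫ eqToHom Q.eq = eqToHom P.eq ≫ f.map right

instance : Category (StrictPullback g f) where
  Hom P Q := Hom P Q
  id P := { left := 𝟙 _, right := 𝟙 _, w := by simp }
  comp u v :=
    { left := u.left ≫ v.left
      right := u.right ≫ v.right
      w := by
        rw [Functor.map_comp, Functor.map_comp, Category.assoc, v.w, ← Category.assoc, u.w,
          Category.assoc] }

end StrictPullback

/-- The projection from a strict pullback to the domain of `g`. -/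
def strictPullbackFst (g : X ⥤ B) (f : A ⥤ B) : StrictPullback g f ⥤ X where
  obj P := P.fst
  map u := u.left

/-- The projection from a strict pullback to the domain of `f`. -/
def strictPullbackSnd (g : X ⥤ B) (f : A ⥤ B) : StrictPullback g f ⥤ A where
  obj P := P.snd
  map u := u.right

end StrictPullback

section Statement6

variable {A : Type u₁} {B : Type u₂} {X : Type u₃} {E₁ : Type u₄} {E₂ : Type u₅}
variable [Category.{v₁} A] [Category.{v₂} B] [Category.{v₃} X]
variable [Category.{v₄} E₁] [Category.{v₅} E₂]
variable (f : A ⥤ B) (d₁ : E₁ ⥤ X) (c₁ : E₁ ⥤ A)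

/-- The head of the composite span `(f/B) ∘ E₁`: pairs `(e, w)` with `e` in `E₁` and `w` in
`f/B = Comma f (𝟭 B)` such that the projection of `w` to `A` agrees with `c₁.obj e`. -/
abbrev SpanComp := StrictPullback c₁ (Comma.fst f (𝟭 B))

/-- The left leg of the composite span `(f/B) ∘ E₁`. -/
def spanCompLeft : SpanComp f c₁ ⥤ X :=
  strictPullbackFst c₁ (Comma.fst f (𝟭 B)) ⋙ d₁

/-- The right leg of the composite span `(f/B) ∘ E₁`. -/
def spanCompRight : SpanComp f c₁ ⥤ B :=
  strictPullbackSnd c₁ (Comma.fst f (𝟭 B)) ⋙ Comma.snd f (𝟭 B)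

/-- The canonical span morphism `j : f ∘ E₁ ⟶ (f/B) ∘ E₁`, where `f ∘ E₁` is identified
with the span with head `E₁` and legs `d₁` and `c₁ ⋙ f`:  it sends `e` to
`(e, (c₁.obj e, f.obj (c₁.obj e), identity))`. -/
def jSpan : E₁ ⥤ SpanComp f c₁ where
  obj e :=
    { fst := e
      snd := { left := c₁.obj e, right := f.obj (c₁.obj e), hom := 𝟙 _ }
      eq := rfl }
  map ε :=
    { left := ε
      right := { left := c₁.map ε, right := f.map (c₁.map ε), w := by simp }
      w := by simp }

section IsIdentityHom

variable {C : Type*} [Category C] {x y z : C}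

lemma isIdentityHom_eqToHom (h : x = y) : IsIdentityHom (eqToHom h) := ⟨h, rfl⟩

lemma isIdentityHom_id (x : C) : IsIdentityHom (𝟙 x) := ⟨rfl, rfl⟩

lemma IsIdentityHom.obj_eq {φ : x ⟶ y} (h : IsIdentityHom φ) : x = y := h.1

lemma IsIdentityHom.comp_s6 {φ : x ⟶ y} {ψ : y ⟶ z} (hφ : IsIdentityHom φ)
    (hψ : IsIdentityHom ψ) : IsIdentityHom (φ ≫ ψ) := by
  obtain ⟨h, rfl⟩ := hφ
  obtain ⟨h', rfl⟩ := hψ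
  exact ⟨h.trans h', by simp⟩

lemma IsIdentityHom.map {D : Type*} [Category D] (F : C ⥤ D) {φ : x ⟶ y}
    (h : IsIdentityHom φ) : IsIdentityHom (F.map φ) := by
  obtain ⟨h, rfl⟩ := h
  exact ⟨congrArg F.obj h, eqToHom_map F h⟩

lemma IsIdentityHom.of_comp_eqToHom {φ : x ⟶ y} {h : y = z}
    (hφ : IsIdentityHom (φ ≫ eqToHom h)) : IsIdentityHom φ := by
  simpa using hφ.comp_s6 (isIdentityHom_eqToHom h.symm)

end IsIdentityHom

lemma CategoryTheory.Functor.eq_of_isIdentityHom_app {C D : Type*} [Category C] [Category D]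
    {F G : C ⥤ D} (τ : F ⟶ G) (h : ∀ X, IsIdentityHom (τ.app X)) : F = G := by
  refine CategoryTheory.Functor.ext (fun X => (h X).obj_eq) fun X Y f => ?_
  have := τ.naturality f
  obtain ⟨_, hX⟩ := h X
  obtain ⟨_, hY⟩ := h Y
  rw [hX, hY] at this
  rw [← Category.assoc, ← this]
  simp

structure IsVerticalLift {C X E B : Type*} [Category C] [Category X] [Category E] [Category B]
    (d : E ⥤ X) (c : E ⥤ B) {G G' : C ⥤ E} (τ : G ⟶ G') {K : C ⥤ B} (α : G ⋙ c ⟶ K) :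
    Prop where
  comp_eq : G' ⋙ c = K
  vertical : ∀ P, IsIdentityHom (d.map (τ.app P))
  map_app : ∀ P, c.map (τ.app P) ≫ eqToHom (Functor.congr_obj comp_eq P) = α.app P

lemma IsVerticalLift.comp_left_eq {C X E B : Type*} [Category C] [Category X] [Category E]
    [Category B] {d : E ⥤ X} {c : E ⥤ B} {G G' : C ⥤ E} {τ : G ⟶ G'} {K : C ⥤ B}
    {α : G ⋙ c ⟶ K} (hτ : IsVerticalLift d c τ α) : G' ⋙ d = G ⋙ d :=
  (Functor.eq_of_isIdentityHom_app (Functor.whiskerRight τ d) hτ.vertical).symm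

namespace IsTwoSidedDiscreteFibration

variable {X E B : Type*} [Category X] [Category E] [Category B] {d : E ⥤ X} {c : E ⥤ B}
  (hE : IsTwoSidedDiscreteFibration d c)
include hE

lemma rightLift_unique {e x₁ x₂ : E} {u₁ : e ⟶ x₁} {u₂ : e ⟶ x₂}
    (h₁ : IsIdentityHom (d.map u₁)) (h₂ : IsIdentityHom (d.map u₂)) (hx : c.obj x₁ = c.obj x₂)
    (hc : c.map u₁ ≫ eqToHom hx = c.map u₂) : ∃ h : x₁ = x₂, u₁ ≫ eqToHom h = u₂ := by
  have := (hE.lift_right e _ (c.map u₂)).unique (y₁ := ⟨x₁, u₁⟩) (y₂ := ⟨x₂, u₂⟩)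
    ⟨⟨hx, hc.symm⟩, h₁⟩ ⟨⟨rfl, by simp⟩, h₂⟩
  cases this
  exact ⟨rfl, by simp⟩

lemma leftLift_unique {e x₁ x₂ : E} {u₁ : x₁ ⟶ e} {u₂ : x₂ ⟶ e}
    (h₁ : IsIdentityHom (c.map u₁)) (h₂ : IsIdentityHom (c.map u₂)) (hx : d.obj x₁ = d.obj x₂)
    (hd : eqToHom hx ≫ d.map u₂ = d.map u₁) : ∃ h : x₁ = x₂, eqToHom h ≫ u₂ = u₁ := by
  have := (hE.lift_left e _ (d.map u₁)).unique (y₁ := ⟨x₁, u₁⟩) (y₂ := ⟨x₂, u₂⟩)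
    ⟨⟨rfl, by simp⟩, h₁⟩ ⟨⟨hx, hd.symm⟩, h₂⟩
  cases this
  exact ⟨rfl, by simp⟩

lemma hom_ext {e₁ e₂ : E} {m m' : e₁ ⟶ e₂} (hd : d.map m = d.map m') (hc : c.map m = c.map m') :
    m = m' := by
  obtain ⟨x, u, v, rfl, hu, ⟨hv, hv_eq⟩⟩ := hE.factor m
  obtain ⟨x', u', v', rfl, hu', ⟨hv', hv'_eq⟩⟩ := hE.factor m'
  obtain ⟨rfl, rfl⟩ : ∃ h : x = x', u ≫ eqToHom h = u' := by
    refine hE.rightLift_unique hu hu' (hv.trans hv'.symm) ?_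
    simp only [Functor.map_comp, hv_eq, hv'_eq] at hc
    simp [← cancel_mono (eqToHom hv'), hc]
  obtain ⟨hu, hu_eq⟩ := hu
  obtain ⟨-, rfl⟩ : ∃ h : x = x, eqToHom h ≫ v' = v := by
    refine hE.leftLift_unique ⟨hv, hv_eq⟩ ⟨hv', hv'_eq⟩ rfl ?_
    simpa [hu_eq, cancel_epi] using hd.symm
  simp

lemma isIdentityHom_of_map {e₁ e₂ : E} {m : e₁ ⟶ e₂} (hd : IsIdentityHom (d.map m))
    (hc : IsIdentityHom (c.map m)) : IsIdentityHom m := by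
  obtain ⟨h, hm⟩ := hE.rightLift_unique (u₂ := 𝟙 e₁) hd
    (by rw [d.map_id]; exact isIdentityHom_id _) hc.obj_eq.symm (by obtain ⟨_, hc⟩ := hc; simp [hc])
  exact ⟨h.symm, by simpa [← cancel_mono (eqToHom h)] using hm⟩

lemma hom_ext_of_comp {e x y : E} {r : e ⟶ x} {n n' : x ⟶ y} (hr : IsIdentityHom (d.map r))
    (h : r ≫ n = r ≫ n') (hc : c.map n = c.map n') : n = n' := by
  refine hE.hom_ext ?_ hc
  obtain ⟨_, hr⟩ := hr
  simpa [hr, cancel_epi] using congrArg d.map h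

/-- `n` is the lift of `k` at `x` followed by the `c`-vertical half of a factorisation of
`m ≫ r'`: uniqueness of lifts identifies `r` followed by that lift with its `d`-vertical half. -/
lemma exists_comp_eq_comp {e e' x x' : E} (m : e ⟶ e') {r : e ⟶ x} {r' : e' ⟶ x'}
    (hr : IsIdentityHom (d.map r)) (k : c.obj x ⟶ c.obj x')
    (hk : c.map r ≫ k = c.map m ≫ c.map r') : ∃ n : x ⟶ x', r ≫ n = m ≫ r' ∧ c.map n = k := by
  obtain ⟨y, u, v, huv, hu, ⟨hv, hv_eq⟩⟩ := hE.factor (m ≫ r')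
  obtain ⟨⟨z, t⟩, ⟨hz, hkt⟩, ht⟩ := (hE.lift_right x _ k).exists
  dsimp only at hz hkt ht
  obtain ⟨rfl, rfl⟩ : ∃ h : z = y, (r ≫ t) ≫ eqToHom h = u := by
    refine hE.rightLift_unique (by rw [d.map_comp]; exact hr.comp_s6 ht) hu (hz.trans hv.symm) ?_
    rw [← cancel_mono (eqToHom hv), ← hv_eq, ← c.map_comp, ← huv, c.map_comp m r', ← hk, hkt]
    simp [hv_eq]
  refine ⟨t ≫ v, by simpa using huv.symm, ?_⟩
  simp [hv_eq, hkt]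

theorem exists_isVerticalLift {C : Type*} [Category C] (G : C ⥤ E) {K : C ⥤ B}
    (α : G ⋙ c ⟶ K) : ∃ (G' : C ⥤ E) (τ : G ⟶ G'), IsVerticalLift d c τ α := by
  have hlift : ∀ P, ∃ (x : E) (r : G.obj P ⟶ x) (h : c.obj x = K.obj P),
      c.map r ≫ eqToHom h = α.app P ∧ IsIdentityHom (d.map r) := fun P => by
    obtain ⟨⟨x, r⟩, ⟨h, hα⟩, hr⟩ := (hE.lift_right _ _ (α.app P)).exists
    exact ⟨x, r, h, hα.symm, hr⟩
  choose O r hO hα hr using hlift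
  have hmap : ∀ P Q (u : P ⟶ Q), ∃ n : O P ⟶ O Q,
      r P ≫ n = G.map u ≫ r Q ∧ c.map n = eqToHom (hO P) ≫ K.map u ≫ eqToHom (hO Q).symm :=
    fun P Q u => hE.exists_comp_eq_comp (G.map u) (hr P) _ (by
      rw [reassoc_of% (hα P), ← α.naturality_assoc, ← hα Q]
      simp)
  choose n hn hnc using hmap
  let G' : C ⥤ E :=
    { obj := O
      map := n _ _
      map_id := fun P => hE.hom_ext_of_comp (hr P) (by simp [hn]) (by simp [hnc])
      map_comp := fun u v => hE.hom_ext_of_comp (hr _) (by simp [hn, reassoc_of% hn])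
        (by simp [hnc]) }
  exact ⟨G', { app := r, naturality := fun P Q u => (hn P Q u).symm },
    { comp_eq := CategoryTheory.Functor.ext hO fun P Q u => by simp [G', hnc]
      vertical := hr
      map_app := hα }⟩

theorem eq_of_isVerticalLift {C : Type*} [Category C] {G G₁ G₂ : C ⥤ E} {K : C ⥤ B}
    {α : G ⋙ c ⟶ K} {τ₁ : G ⟶ G₁} {τ₂ : G ⟶ G₂} (h₁ : IsVerticalLift d c τ₁ α)
    (h₂ : IsVerticalLift d c τ₂ α) : G₁ = G₂ := by
  have hobj : ∀ P, ∃ h : G₁.obj P = G₂.obj P, τ₁.app P ≫ eqToHom h = τ₂.app P := fun P =>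
    hE.rightLift_unique (h₁.vertical P) (h₂.vertical P)
      ((Functor.congr_obj h₁.comp_eq P).trans (Functor.congr_obj h₂.comp_eq P).symm) (by
        rw [← cancel_mono (eqToHom (Functor.congr_obj h₂.comp_eq P)), h₂.map_app, ← h₁.map_app]
        simp)
  choose hobj hτ using hobj
  refine CategoryTheory.Functor.ext hobj fun P Q u => hE.hom_ext_of_comp (h₁.vertical P) ?_ ?_
  · rw [reassoc_of% (hτ P), ← τ₂.naturality_assoc, ← hτ Q]
    simp
  · have e₁ := Functor.congr_hom h₁.comp_eq u
    have e₂ := Functor.congr_hom h₂.comp_eq u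
    simp only [Functor.comp_map] at e₁ e₂
    simp [e₁, e₂, eqToHom_map]

end IsTwoSidedDiscreteFibration

namespace StrictPullback

variable {X A B : Type*} [Category X] [Category A] [Category B] {g : X ⥤ B} {f : A ⥤ B}

@[ext]
lemma hom_ext {P Q : StrictPullback g f} {u v : P ⟶ Q} (hl : u.left = v.left)
    (hr : u.right = v.right) : u = v :=
  Hom.ext hl hr

end StrictPullback

def spanCompHom : strictPullbackFst c₁ (Comma.fst f (𝟭 B)) ⋙ c₁ ⋙ f ⟶ spanCompRight f c₁ where
  app P := f.map (eqToHom P.eq) ≫ P.snd.hom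
  naturality P Q u := by
    have hw : f.map (c₁.map u.left) ≫ f.map (eqToHom Q.eq) =
        f.map (eqToHom P.eq) ≫ f.map u.right.left := by
      rw [← f.map_comp, ← f.map_comp]
      exact congrArg f.map u.w
    dsimp [spanCompRight, strictPullbackFst, strictPullbackSnd]
    rw [reassoc_of% hw, Category.assoc]
    exact congrArg (f.map (eqToHom P.eq) ≫ ·) u.right.w

def jSpanFstHom : strictPullbackFst c₁ (Comma.fst f (𝟭 B)) ⋙ jSpan f c₁ ⟶ 𝟭 (SpanComp f c₁) where
  app P :=
    { left := 𝟙 P.fst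
      right :=
        { left := eqToHom P.eq
          right := (spanCompHom f c₁).app P
          w := by simp [jSpan, spanCompHom]; rfl }
      w := by
        show c₁.map (𝟙 P.fst) ≫ eqToHom P.eq = 𝟙 _ ≫ eqToHom P.eq
        rw [c₁.map_id] }
  naturality P Q u := by
    ext
    · exact (Category.comp_id _).trans (Category.id_comp _).symm
    · exact u.w
    · exact (spanCompHom f c₁).naturality u

section Extension

variable {f d₁ c₁} {d₂ : E₂ ⥤ X} {c₂ : E₂ ⥤ B} {ψ : E₁ ⥤ E₂}

def extensionHom (hc : ψ ⋙ c₂ = c₁ ⋙ f) :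
    (strictPullbackFst c₁ (Comma.fst f (𝟭 B)) ⋙ ψ) ⋙ c₂ ⟶ spanCompRight f c₁ :=
  eqToHom (congrArg (strictPullbackFst c₁ (Comma.fst f (𝟭 B)) ⋙ ·) hc) ≫ spanCompHom f c₁

@[simp]
lemma extensionHom_app (hc : ψ ⋙ c₂ = c₁ ⋙ f) (P : SpanComp f c₁) :
    (extensionHom hc).app P =
      eqToHom (Functor.congr_obj hc P.fst) ≫ f.map (eqToHom P.eq) ≫ P.snd.hom := by
  simp [extensionHom, spanCompHom]
  rfl

lemma extends_of_isVerticalLift (h₂ : IsTwoSidedDiscreteFibration d₂ c₂)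
    (hd : ψ ⋙ d₂ = d₁) (hc : ψ ⋙ c₂ = c₁ ⋙ f) {φ : SpanComp f c₁ ⥤ E₂}
    {τ : strictPullbackFst c₁ (Comma.fst f (𝟭 B)) ⋙ ψ ⟶ φ}
    (hτ : IsVerticalLift d₂ c₂ τ (extensionHom hc)) :
    (φ ⋙ d₂ = spanCompLeft f d₁ c₁ ∧ φ ⋙ c₂ = spanCompRight f c₁) ∧ jSpan f c₁ ⋙ φ = ψ := by
  refine ⟨⟨by rw [hτ.comp_left_eq, Functor.assoc, hd]; rfl, hτ.comp_eq⟩, ?_⟩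
  refine (CategoryTheory.Functor.eq_of_isIdentityHom_app (F := ψ)
    (Functor.whiskerLeft (jSpan f c₁) τ) fun e => ?_).symm
  refine h₂.isIdentityHom_of_map (hτ.vertical _)
    (IsIdentityHom.of_comp_eqToHom (h := Functor.congr_obj hτ.comp_eq ((jSpan f c₁).obj e)) ?_)
  have h := hτ.map_app ((jSpan f c₁).obj e)
  rw [extensionHom_app] at h
  exact (congrArg IsIdentityHom h).mpr ((isIdentityHom_eqToHom _).comp_s6
    (((isIdentityHom_eqToHom _).map f).comp_s6 (isIdentityHom_id _)))

lemma exists_isVerticalLift_of_extends (hc : ψ ⋙ c₂ = c₁ ⋙ f)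
    {φ : SpanComp f c₁ ⥤ E₂} (hφd : φ ⋙ d₂ = spanCompLeft f d₁ c₁)
    (hφc : φ ⋙ c₂ = spanCompRight f c₁) (hφj : jSpan f c₁ ⋙ φ = ψ) :
    ∃ τ : strictPullbackFst c₁ (Comma.fst f (𝟭 B)) ⋙ ψ ⟶ φ,
      IsVerticalLift d₂ c₂ τ (extensionHom hc) := by
  subst hφj
  refine ⟨Functor.whiskerRight (jSpanFstHom f c₁) φ, ⟨hφc, fun P => ?_, fun P => ?_⟩⟩
  · show IsIdentityHom (d₂.map (φ.map ((jSpanFstHom f c₁).app P)))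
    rw [← Functor.comp_map, Functor.congr_hom hφd]
    exact (isIdentityHom_eqToHom _).comp_s6
      (((isIdentityHom_id _).map d₁).comp_s6 (isIdentityHom_eqToHom _))
  · show c₂.map (φ.map ((jSpanFstHom f c₁).app P)) ≫ _ = _
    rw [← Functor.comp_map, Functor.congr_hom_assoc hφc, eqToHom_trans, eqToHom_refl,
      Category.comp_id, extensionHom_app]
    rfl

end Extension

/-- yoneda lemma for two-sided discrete fibrations in `CAT`.
Let `(d₁, E₁, c₁)` be a span from `X` to `A` and `(d₂, E₂, c₂)` a two-sided discrete
fibration from `X` to `B`.  Composition with the canonical span morphism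
`j : f ∘ E₁ ⟶ (f/B) ∘ E₁` sends span morphisms `(f/B) ∘ E₁ ⟶ E₂` to span morphisms
`f ∘ E₁ ⟶ E₂`, and this assignment is a bijection (each span morphism `f ∘ E₁ ⟶ E₂`
extends to a unique span morphism `(f/B) ∘ E₁ ⟶ E₂`). -/
theorem stmt6 (d₂ : E₂ ⥤ X) (c₂ : E₂ ⥤ B)
    (h₂ : IsTwoSidedDiscreteFibration d₂ c₂) :
    (∀ φ : SpanComp f c₁ ⥤ E₂,
        (φ ⋙ d₂ = spanCompLeft f d₁ c₁ ∧ φ ⋙ c₂ = spanCompRight f c₁) →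
        ((jSpan f c₁ ⋙ φ) ⋙ d₂ = d₁ ∧ (jSpan f c₁ ⋙ φ) ⋙ c₂ = c₁ ⋙ f)) ∧
    (∀ ψ : E₁ ⥤ E₂, (ψ ⋙ d₂ = d₁ ∧ ψ ⋙ c₂ = c₁ ⋙ f) →
        ∃! φ : SpanComp f c₁ ⥤ E₂,
          (φ ⋙ d₂ = spanCompLeft f d₁ c₁ ∧ φ ⋙ c₂ = spanCompRight f c₁) ∧
          jSpan f c₁ ⋙ φ = ψ) := by
  refine ⟨fun φ ⟨hφd, hφc⟩ => ⟨by rw [Functor.assoc, hφd]; rfl, by rw [Functor.assoc, hφc]; rfl⟩,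
    fun ψ ⟨hd, hc⟩ => ?_⟩
  obtain ⟨φ, τ, hτ⟩ := h₂.exists_isVerticalLift _ (extensionHom hc)
  refine ⟨φ, extends_of_isVerticalLift h₂ hd hc hτ, fun φ' ⟨⟨hφd, hφc⟩, hφj⟩ => ?_⟩
  obtain ⟨τ', hτ'⟩ := exists_isVerticalLift_of_extends hc hφd hφc hφj
  exact h₂.eq_of_isVerticalLift hτ' hτ

end Statement6
end

section
/- Let f : A ⥤ B, g : A ⥤ C and h : B ⥤ C be functors. Let f/B denote the comma category Comma f (𝟭 B), with projections p : f/B ⥤ A and q : f/B ⥤ B and canonical natural transformation λ : p ⋙ f ⟶ q whose component at (a, b, β) is β, and let i_f : A ⥤ f/B be the functor a ↦ (a, f.obj a, identity) (so that p ∘ i_f = 𝟭_A, q ∘ i_f = f and λ whiskered with i_f is the identity). Then whiskering with i_f gives a bijection from the set of natural transformations p ⋙ g ⟶ q ⋙ h to the set of natural transformations g ⟶ f ⋙ h, whose inverse sends α : g ⟶ f ⋙ h to the composite of the whiskering of α with p followed by the whiskering of λ with h (that is, p ⋙ g ⟶ p ⋙ f ⋙ h ⟶ q ⋙ h). -/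
open CategoryTheory

universe w v v₁ v₂ v₃ v₄ v₅ u u₁ u₂ u₃ u₄ u₅

section Statement7

variable {A : Type u₁} {B : Type u₂} {C : Type u₃}
variable [Category.{v₁} A] [Category.{v₂} B] [Category.{v₃} C]

/-- The canonical functor `i_f : A ⥤ f/B`, `a ↦ (a, f.obj a, identity)`. -/
def iF (f : A ⥤ B) : A ⥤ Comma f (𝟭 B) where
  obj a := { left := a, right := f.obj a, hom := 𝟙 (f.obj a) }
  map φ := { left := φ, right := f.map φ, w := by simp }

/-- The canonical 2-cell `λ : p ⋙ f ⟶ q` of the comma square for `f/B`, whose component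
at `(a, b, β)` is `β`. -/
def lamF (f : A ⥤ B) : Comma.fst f (𝟭 B) ⋙ f ⟶ Comma.snd f (𝟭 B) where
  app w := w.hom
  naturality _ _ m := m.w

/-- Whiskering with `i_f` : it sends `α : p ⋙ g ⟶ q ⋙ h` to a natural transformation
`g ⟶ f ⋙ h` (using the strict equalities `i_f ⋙ p = 𝟭 A` and `i_f ⋙ q = f`). -/
def restrIF (f : A ⥤ B) (g : A ⥤ C) (h : B ⥤ C)
    (α : Comma.fst f (𝟭 B) ⋙ g ⟶ Comma.snd f (𝟭 B) ⋙ h) : g ⟶ f ⋙ h where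
  app a := α.app ((iF f).obj a)
  naturality _ _ φ := α.naturality ((iF f).map φ)

variable {f : A ⥤ B} {g : A ⥤ C} {h : B ⥤ C}

/-- Naturality of `α : p ⋙ g ⟶ q ⋙ h` along `(𝟙 a, β) : i_f a ⟶ (a, b, β)` recovers `α` from its
restriction along `i_f`. -/
def iFObjToSelf (w : Comma f (𝟭 B)) : (iF f).obj w.left ⟶ w where
  left := 𝟙 w.left
  right := w.hom
  w := by simp [iF]

theorem app_eq_restrIF_app_comp (α : Comma.fst f (𝟭 B) ⋙ g ⟶ Comma.snd f (𝟭 B) ⋙ h)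
    (w : Comma f (𝟭 B)) : α.app w = (restrIF f g h α).app w.left ≫ h.map w.hom := by
  have id_comp_app : α.app w = g.map (𝟙 w.left) ≫ α.app w := by simp
  exact id_comp_app.trans (α.naturality (iFObjToSelf w))

theorem whiskerLeft_restrIF_comp_whiskerRight_lamF
    (α : Comma.fst f (𝟭 B) ⋙ g ⟶ Comma.snd f (𝟭 B) ⋙ h) :
    Functor.whiskerLeft (Comma.fst f (𝟭 B)) (restrIF f g h α) ≫
      Functor.whiskerRight (lamF f) h = α := by
  ext w
  exact (app_eq_restrIF_app_comp α w).symm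

theorem restrIF_whiskerLeft_comp_whiskerRight_lamF (β : g ⟶ f ⋙ h) :
    restrIF f g h (Functor.whiskerLeft (Comma.fst f (𝟭 B)) β ≫
      Functor.whiskerRight (lamF f) h) = β := by
  ext a
  simp [restrIF, lamF, iF, Comma.fst]

/-- Whiskering with `i_f` gives a bijection from natural transformations
`p ⋙ g ⟶ q ⋙ h` to natural transformations `g ⟶ f ⋙ h`; its inverse sends
`β : g ⟶ f ⋙ h` to the paste `p ⋙ g ⟶ p ⋙ f ⋙ h ⟶ q ⋙ h` of the whiskering of `β`
with `p` followed by the whiskering of `λ` with `h`. -/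
theorem stmt7 (f : A ⥤ B) (g : A ⥤ C) (h : B ⥤ C) :
    Function.Bijective (restrIF f g h) ∧
    (∀ α : Comma.fst f (𝟭 B) ⋙ g ⟶ Comma.snd f (𝟭 B) ⋙ h,
        Functor.whiskerLeft (Comma.fst f (𝟭 B)) (restrIF f g h α) ≫ Functor.whiskerRight (lamF f) h = α) ∧
    (∀ β : g ⟶ f ⋙ h,
        restrIF f g h (Functor.whiskerLeft (Comma.fst f (𝟭 B)) β ≫ Functor.whiskerRight (lamF f) h) = β) :=
  ⟨Function.bijective_iff_has_inverse.mpr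
      ⟨_, fun α => whiskerLeft_restrIF_comp_whiskerRight_lamF α,
        fun β => restrIF_whiskerLeft_comp_whiskerRight_lamF β⟩,
    fun α => whiskerLeft_restrIF_comp_whiskerRight_lamF α,
    fun β => restrIF_whiskerLeft_comp_whiskerRight_lamF β⟩

end Statement7
end

section
/- Let g : A ⥤ C be a Grothendieck opfibration, let f : A ⥤ B and h : C ⥤ B be functors, and let φ : f ⟶ g ⋙ h be a natural transformation. Then φ exhibits h as a pointwise left Kan extension of f along g if and only if for every category X and every functor c : X ⥤ C, writing P for the strict pullback of g along c (objects: pairs (x, a) with c.obj x = g.obj a; morphisms: pairs (u, v) with c.map u = g.map v modulo object equalities) with projections p : P ⥤ A and q : P ⥤ X, the whiskering of φ with p, as a natural transformation p ⋙ f ⟶ q ⋙ c ⋙ h, exhibits c ⋙ h as a left Kan extension of p ⋙ f along q. -/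
open CategoryTheory

universe w v v₁ v₂ v₃ v₄ v₅ u u₁ u₂ u₃ u₄ u₅

section Statement9

variable {A : Type u₁} {C : Type u₂} {B : Type u₃}
variable [Category.{v₁} A] [Category.{v₂} C] [Category.{v₃} B]

/-- The canonical natural transformation `p ⋙ g ⟶ q ⋙ c` on the strict pullback of
`g : A ⥤ C` along `c : X ⥤ C` (it is a natural isomorphism of `eqToHom`s). -/
def strictPullbackComparison {X : Type u₄} [Category.{v₄} X] (c : X ⥤ C) (g : A ⥤ C) :
    strictPullbackSnd c g ⋙ g ⟶ strictPullbackFst c g ⋙ c where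
  app P := eqToHom P.eq.symm
  naturality P Q u := by
    have h := u.w
    rw [comp_eqToHom_iff] at h
    dsimp [strictPullbackFst, strictPullbackSnd]
    rw [h]
    simp

/-- The whiskering of `φ : f ⟶ g ⋙ h` with the projection `p` from the strict pullback of
`g` along `c`, viewed as a natural transformation `p ⋙ f ⟶ q ⋙ (c ⋙ h)`. -/
def strictPullbackWhisker {X : Type u₄} [Category.{v₄} X] (c : X ⥤ C)
    (g : A ⥤ C) (f : A ⥤ B) (h : C ⥤ B) (φ : f ⟶ g ⋙ h) :
    strictPullbackSnd c g ⋙ f ⟶ strictPullbackFst c g ⋙ (c ⋙ h) :=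
  Functor.whiskerLeft (strictPullbackSnd c g) φ ≫ Functor.whiskerRight (strictPullbackComparison c g) h

/-! When `g` is an opfibration, for each `x : X` the functor `q / x ⥤ g / c x`,
`((x', a), u) ↦ (a, c u)`, is final: opcartesian lifts link any two objects of its comma
categories by a zigzag. The cocone of the whiskered transformation at `x` is the restriction of
the cocone of `φ` at `c x` along this functor, so one is a colimit iff the other is; this gives
the forward direction. For the converse take for `c` the constant functor at `c₀` on the
one-object category: a left Kan extension is pointwise at a terminal object. -/

open Limits in
noncomputable def CategoryTheory.Functor.isPointwiseLeftKanExtensionAtOfIsTerminal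
    {J D H : Type*} [Category J] [Category D] [Category H] {L : J ⥤ D} {F : J ⥤ H}
    (F' : D ⥤ H) (α : F ⟶ L ⋙ F') [F'.IsLeftKanExtension α] {t : D} (ht : IsTerminal t) :
    (Functor.LeftExtension.mk F' α).IsPointwiseLeftKanExtensionAt t :=
  let toConst (s : Cocone (CostructuredArrow.proj L t ⋙ F)) :
      F ⟶ L ⋙ (Functor.const D).obj s.pt :=
    { app j := s.ι.app (CostructuredArrow.mk (ht.from (L.obj j)))
      naturality j j' u :=
        (s.w (CostructuredArrow.homMk (f := .mk (ht.from (L.obj j)))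
          (f' := .mk (ht.from (L.obj j'))) u (ht.hom_ext _ _))).trans (Category.comp_id _).symm }
  { desc s := (F'.descOfIsLeftKanExtension α _ (toConst s)).app t
    fac s j := by
      obtain ⟨j, ⟨⟨⟩⟩, f⟩ := j
      obtain rfl := ht.hom_ext f (ht.from _)
      let δ := F'.descOfIsLeftKanExtension α _ (toConst s)
      change (α.app j ≫ F'.map (ht.from (L.obj j))) ≫ δ.app t = (toConst s).app j
      rw [Category.assoc, δ.naturality]
      dsimp
      rw [Category.comp_id, F'.descOfIsLeftKanExtension_fac_app]
    uniq s m hm := by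
      let m' : F'.obj t ⟶ s.pt := m
      let δ : F' ⟶ (Functor.const D).obj s.pt :=
        { app d := F'.map (ht.from d) ≫ m'
          naturality d d' u := by
            dsimp
            rw [Category.comp_id, ← F'.map_comp_assoc, ht.hom_ext (u ≫ ht.from d')] }
      have hδ : δ = F'.descOfIsLeftKanExtension α _ (toConst s) :=
        F'.hom_ext_of_isLeftKanExtension α _ _ (by
          rw [F'.descOfIsLeftKanExtension_fac]
          ext j
          exact (Category.assoc _ _ _).symm.trans (hm (CostructuredArrow.mk (ht.from (L.obj j)))))
      change m' = _
      simpa [δ, ht.hom_ext (ht.from t) (𝟙 t)] using NatTrans.congr_app hδ t }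

structure UnitCat : Type u

instance : Category.{v} UnitCat.{u} where
  Hom _ _ := PUnit.{v + 1}
  id _ := ⟨⟩
  comp _ _ := ⟨⟩

def UnitCat.isTerminal : Limits.IsTerminal.{v} UnitCat.mk.{u} :=
  Limits.IsTerminal.ofUniqueHom (fun _ => ⟨⟩) (fun _ _ => rfl)

theorem IsGrothendieckOpfibration.exists_lift {g : A ⥤ C} (hg : IsGrothendieckOpfibration g)
    {a : A} {c₀ : C} (v : g.obj a ⟶ c₀) :
    ∃ (a' : A) (α : a ⟶ a') (e : g.obj a' = c₀),
      IsCartesianHom g.op α.op ∧ g.map α ≫ eqToHom e = v := by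
  obtain ⟨a', α, e, hα, hv⟩ := hg (.op a) (.op c₀) v.op
  refine ⟨a'.unop, α.unop, (congrArg Opposite.unop e).symm, hα, ?_⟩
  simpa [eqToHom_unop] using congrArg Quiver.Hom.unop hv

theorem IsCartesianHom.exists_factor_of_op {g : A ⥤ C} {a a' : A} {α : a ⟶ a'}
    (hα : IsCartesianHom g.op α.op) {a₃ : A} (ζ : a ⟶ a₃) (β : g.obj a' ⟶ g.obj a₃)
    (hζ : g.map ζ = g.map α ≫ β) : ∃ n : a' ⟶ a₃, g.map n = β ∧ α ≫ n = ζ := by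
  obtain ⟨n, ⟨hn, hnα⟩, -⟩ := hα (.op a₃) ζ.op β.op (congrArg Quiver.Hom.op hζ)
  exact ⟨n.unop, congrArg Quiver.Hom.unop hn, congrArg Quiver.Hom.unop hnα⟩

section Final

variable {X : Type u₄} [Category.{v₄} X] (c : X ⥤ C) (g : A ⥤ C) (x : X)

def strictPullbackCostructuredArrow :
    CostructuredArrow (strictPullbackFst c g) x ⥤ CostructuredArrow g (c.obj x) where
  obj J := CostructuredArrow.mk (eqToHom J.left.eq.symm ≫ c.map J.hom)
  map {J J'} m := CostructuredArrow.homMk m.left.right (by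
    have hm : m.left.left ≫ J'.hom = J.hom := CostructuredArrow.w m
    have hw := m.left.w
    rw [comp_eqToHom_iff] at hw
    dsimp [strictPullbackFst] at hm ⊢
    rw [← hm, c.map_comp, hw]
    simp)

variable {c g x}

def liftedStructuredArrow (d : CostructuredArrow g (c.obj x)) {x' : X} (u : x' ⟶ x) {a₁ : A}
    (α₁ : d.left ⟶ a₁) (e₁ : g.obj a₁ = c.obj x')
    (w : g.map α₁ ≫ eqToHom e₁ ≫ c.map u = d.hom) :
    StructuredArrow d (strictPullbackCostructuredArrow c g x) :=
  StructuredArrow.mk (Y := CostructuredArrow.mk (S := strictPullbackFst c g)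
      (Y := (⟨x', a₁, e₁.symm⟩ : StrictPullback c g)) u)
    (CostructuredArrow.homMk (f := d) (f' := .mk (eqToHom e₁ ≫ c.map u)) α₁ w)

theorem nonempty_liftedStructuredArrow_hom {d : CostructuredArrow g (c.obj x)} {x' : X}
    {u : x' ⟶ x} {a₁ : A} {α₁ : d.left ⟶ a₁} {e₁ : g.obj a₁ = c.obj x'}
    (w : g.map α₁ ≫ eqToHom e₁ ≫ c.map u = d.hom) (hα₁ : IsCartesianHom g.op α₁.op)
    (O : StructuredArrow d (strictPullbackCostructuredArrow c g x))
    (s : x' ⟶ O.right.left.fst) (hs : s ≫ O.right.hom = u)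
    (hO : g.map O.hom.left = g.map α₁ ≫ eqToHom e₁ ≫ c.map s ≫ eqToHom O.right.left.eq) :
    Nonempty (liftedStructuredArrow d u α₁ e₁ w ⟶ O) := by
  obtain ⟨n, hn, hnα⟩ := hα₁.exists_factor_of_op (a₃ := O.right.left.snd) O.hom.left _ hO
  have hw : c.map s ≫ eqToHom O.right.left.eq = eqToHom e₁.symm ≫ g.map n := by simp [hn]
  refine ⟨StructuredArrow.homMk (CostructuredArrow.homMk ⟨s, n, hw⟩ hs) ?_⟩
  exact CostructuredArrow.hom_ext _ _ hnα

theorem strictPullbackCostructuredArrow_final (hg : IsGrothendieckOpfibration g) :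
    (strictPullbackCostructuredArrow c g x).Final := by
  refine ⟨fun d => ?_⟩
  obtain ⟨a₀, α₀, e₀, -, hα₀⟩ := hg.exists_lift d.hom
  let O₀ := liftedStructuredArrow d (𝟙 x) α₀ e₀ (by simpa using hα₀)
  -- `O ← O₁ → O₀`, where `O₁` sits over the vertex of `O` via an opcartesian lift.
  have zigzag_O₀ : ∀ O, Zigzag O O₀ := by
    intro O
    have hO : g.map O.hom.left ≫ eqToHom O.right.left.eq.symm ≫ c.map O.right.hom = d.hom :=
      CostructuredArrow.w O.hom
    obtain ⟨a₁, α₁, e₁, hα₁, hv⟩ :=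
      hg.exists_lift (g.map O.hom.left ≫ eqToHom O.right.left.eq.symm)
    have h₁ : g.map α₁ ≫ eqToHom e₁ ≫ c.map O.right.hom = d.hom := by
      rw [← Category.assoc, hv, Category.assoc, hO]
    obtain ⟨m⟩ :=
      nonempty_liftedStructuredArrow_hom h₁ hα₁ O (𝟙 _) (Category.id_comp _)
      (by
        rw [c.map_id, Category.id_comp, ← Category.assoc]
        exact (comp_eqToHom_iff _ _ _).1 hv.symm)
    obtain ⟨m₀⟩ :=
      nonempty_liftedStructuredArrow_hom h₁ hα₁ O₀ O.right.hom (Category.comp_id _)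
      (by
        show g.map α₀ = g.map α₁ ≫ eqToHom e₁ ≫ c.map O.right.hom ≫ eqToHom e₀.symm
        rw [← Category.assoc (eqToHom e₁), ← Category.assoc (g.map α₁), h₁, ← hα₀]
        simp)
    exact Zigzag.of_inv_hom m m₀
  have : Nonempty (StructuredArrow d (strictPullbackCostructuredArrow c g x)) := ⟨O₀⟩
  exact zigzag_isConnected fun O O' =>
    zigzag_equivalence.trans (zigzag_O₀ O) (zigzag_equivalence.symm (zigzag_O₀ O'))

end Final

section Comparison

variable {X : Type u₄} [Category.{v₄} X] (c : X ⥤ C) {g : A ⥤ C} {f : A ⥤ B} {h : C ⥤ B}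
  (φ : f ⟶ g ⋙ h) (x : X)

def coconeAtStrictPullbackWhiskerIso :
    (Functor.LeftExtension.mk (c ⋙ h) (strictPullbackWhisker c g f h φ)).coconeAt x ≅
      ((Functor.LeftExtension.mk h φ).coconeAt (c.obj x)).whisker
        (strictPullbackCostructuredArrow c g x) :=
  Limits.Cocone.ext (Iso.refl _) fun _ => (Category.comp_id _).trans
    ((Category.assoc _ _ _).trans (congrArg (φ.app _ ≫ ·) (h.map_comp _ _).symm))

noncomputable def isPointwiseLeftKanExtensionAtStrictPullbackWhiskerEquiv
    (hg : IsGrothendieckOpfibration g) :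
    (Functor.LeftExtension.mk (c ⋙ h)
        (strictPullbackWhisker c g f h φ)).IsPointwiseLeftKanExtensionAt x ≃
      (Functor.LeftExtension.mk h φ).IsPointwiseLeftKanExtensionAt (c.obj x) :=
  have := strictPullbackCostructuredArrow_final hg (c := c) (x := x)
  (Limits.IsColimit.equivIsoColimit (coconeAtStrictPullbackWhiskerIso c φ x)).trans
    (Functor.Final.isColimitWhiskerEquiv _ _)

end Comparison

/-- Let `g : A ⥤ C` be a Grothendieck opfibration.  A natural
transformation `φ : f ⟶ g ⋙ h` exhibits `h` as a pointwise left Kan extension of `f`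
along `g` if and only if for every category `X` and functor `c : X ⥤ C`, the whiskering of
`φ` with the projection `p` of the strict pullback of `g` along `c` exhibits `c ⋙ h` as a
left Kan extension of `p ⋙ f` along the projection `q` to `X`. -/
theorem stmt9 (g : A ⥤ C) (f : A ⥤ B) (h : C ⥤ B)
    (hg : IsGrothendieckOpfibration g) (φ : f ⟶ g ⋙ h) :
    Nonempty (Functor.LeftExtension.mk h φ).IsPointwiseLeftKanExtension ↔
      ∀ (X : Type u₄) [Category.{v₄} X] (c : X ⥤ C),
        (c ⋙ h).IsLeftKanExtension (strictPullbackWhisker c g f h φ) := by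
  constructor
  · rintro ⟨hφ⟩ X _ c
    exact Functor.LeftExtension.IsPointwiseLeftKanExtension.isLeftKanExtension
      fun x => (isPointwiseLeftKanExtensionAtStrictPullbackWhiskerEquiv c φ x hg).symm (hφ _)
  · intro hφ
    refine ⟨fun c₀ => ?_⟩
    let c : UnitCat.{u₄} ⥤ C := (Functor.const _).obj c₀
    have := hφ UnitCat.{u₄} c
    exact isPointwiseLeftKanExtensionAtStrictPullbackWhiskerEquiv c φ ⟨⟩ hg
      (Functor.isPointwiseLeftKanExtensionAtOfIsTerminal (c ⋙ h) _ UnitCat.isTerminal)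

end Statement9
end

section
/- Let g : A ⥤ C, f : A ⥤ B, h : C ⥤ B be functors and φ : f ⟶ g ⋙ h a natural transformation exhibiting h as a pointwise left Kan extension of f along g. Then for every category X and every functor c : X ⥤ C, writing g/c for the comma category Comma g c with projections p : g/c ⥤ A and q : g/c ⥤ X and canonical 2-cell λ : p ⋙ g ⟶ q ⋙ c, the pasted natural transformation p ⋙ f ⟶ q ⋙ c ⋙ h (the whiskering of φ with p followed by the whiskering of λ with h) exhibits c ⋙ h as a pointwise left Kan extension of p ⋙ f along q. -/
/-! For `x : X`, the functor `g/(c x) ⥤ q/x` sending `(a, u : g a ⟶ c x)` to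
`((a, x, u), 𝟙 x)` has a left adjoint, sending `((a, x', u), k : x' ⟶ x)` to
`(a, u ≫ c.map k)`, so it is final. Along it, the cocone of the pasted transformation
at `x` restricts to the cocone of `φ` at `c x`, which is a colimit by hypothesis; by
finality the former is then a colimit too. -/

open CategoryTheory

universe w v v₁ v₂ v₃ v₄ v₅ u u₁ u₂ u₃ u₄ u₅

section Statement10

variable {A : Type u₁} {C : Type u₂} {B : Type u₃}
variable [Category.{v₁} A] [Category.{v₂} C] [Category.{v₃} B]

/-- The paste of `φ : f ⟶ g ⋙ h` with the comma square for `g/c`: the whiskering of `φ`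
with `p : g/c ⥤ A` followed by the whiskering of the canonical 2-cell
`λ : p ⋙ g ⟶ q ⋙ c` with `h`, giving `p ⋙ f ⟶ q ⋙ (c ⋙ h)`. -/
def commaWhisker {X : Type u₄} [Category.{v₄} X] (g : A ⥤ C) (c : X ⥤ C)
    (f : A ⥤ B) (h : C ⥤ B) (φ : f ⟶ g ⋙ h) :
    Comma.fst g c ⋙ f ⟶ Comma.snd g c ⋙ (c ⋙ h) :=
  Functor.whiskerLeft (Comma.fst g c) φ ≫ Functor.whiskerRight (Comma.natTrans g c) h

section

variable {X : Type u₄} [Category.{v₄} X]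

namespace CategoryTheory.CostructuredArrow

variable (g : A ⥤ C) (c : X ⥤ C) (x : X)

@[simps]
def toCommaSnd : CostructuredArrow g (c.obj x) ⥤ CostructuredArrow (Comma.snd g c) x where
  obj y := mk (Y := Comma.mk y.left x y.hom) (𝟙 x)
  map α := homMk { left := α.left, right := 𝟙 x } (Category.comp_id _)

@[simps]
def ofCommaSnd : CostructuredArrow (Comma.snd g c) x ⥤ CostructuredArrow g (c.obj x) where
  obj o := mk (o.left.hom ≫ c.map o.hom)
  map α := homMk α.left.left (by
    rw [← w α, c.map_comp, ← Category.assoc]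
    simp)

variable {g c x} in
lemma left_right_of_hom_toCommaSnd {o : CostructuredArrow (Comma.snd g c) x}
    {y : CostructuredArrow g (c.obj x)} (α : o ⟶ (toCommaSnd g c x).obj y) :
    α.left.right = o.hom :=
  (Category.comp_id _).symm.trans (w α)

def ofCommaSndAdjunction : ofCommaSnd g c x ⊣ toCommaSnd g c x :=
  Adjunction.mkOfHomEquiv
    { homEquiv := fun o y =>
        { toFun := fun β => homMk { left := β.left, right := o.hom, w := w β } (Category.comp_id _)
          invFun := fun α => homMk α.left.left (by
            have hw := α.left.w
            rw [left_right_of_hom_toCommaSnd α] at hw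
            exact hw)
          left_inv := fun β => by cat_disch
          right_inv := fun α => by
            ext
            · rfl
            · exact (left_right_of_hom_toCommaSnd α).symm }
      homEquiv_naturality_right := fun _ _ => by
        ext
        · rfl
        · exact (Category.comp_id _).symm }

instance : (toCommaSnd g c x).Final := Functor.final_of_adjunction (ofCommaSndAdjunction g c x)

end CategoryTheory.CostructuredArrow

open Functor

def coconeAtCommaWhiskerIso (g : A ⥤ C) (f : A ⥤ B) (h : C ⥤ B) (φ : f ⟶ g ⋙ h) (c : X ⥤ C)
    (x : X) :
    ((LeftExtension.mk (c ⋙ h) (commaWhisker g c f h φ)).coconeAt x).whisker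
        (CostructuredArrow.toCommaSnd g c x) ≅
      (LeftExtension.mk h φ).coconeAt (c.obj x) :=
  Limits.Cocone.ext (Iso.refl _) fun j => by
    change ((φ.app j.left ≫ h.map j.hom) ≫ (c ⋙ h).map (𝟙 x)) ≫ 𝟙 _ = φ.app j.left ≫ h.map j.hom
    simp

noncomputable def isPointwiseLeftKanExtensionAtCommaWhisker {g : A ⥤ C} {f : A ⥤ B}
    {h : C ⥤ B} {φ : f ⟶ g ⋙ h} {c : X ⥤ C} {x : X}
    (hφ : (LeftExtension.mk h φ).IsPointwiseLeftKanExtensionAt (c.obj x)) :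
    (LeftExtension.mk (c ⋙ h) (commaWhisker g c f h φ)).IsPointwiseLeftKanExtensionAt x :=
  (Final.isColimitWhiskerEquiv (CostructuredArrow.toCommaSnd g c x) _)
    (hφ.ofIsoColimit (coconeAtCommaWhiskerIso g f h φ c x).symm)

end

/-- If `φ : f ⟶ g ⋙ h` exhibits `h` as a pointwise left Kan extension
of `f` along `g`, then for every category `X` and functor `c : X ⥤ C`, the pasted natural
transformation `p ⋙ f ⟶ q ⋙ (c ⋙ h)` obtained from the comma square for `g/c` exhibits
`c ⋙ h` as a pointwise left Kan extension of `p ⋙ f` along `q`. -/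
theorem stmt10 (g : A ⥤ C) (f : A ⥤ B) (h : C ⥤ B) (φ : f ⟶ g ⋙ h)
    (hφ : (Functor.LeftExtension.mk h φ).IsPointwiseLeftKanExtension)
    (X : Type u₄) [Category.{v₄} X] (c : X ⥤ C) :
    Nonempty (Functor.LeftExtension.mk (c ⋙ h)
      (commaWhisker g c f h φ)).IsPointwiseLeftKanExtension :=
  ⟨fun x => isPointwiseLeftKanExtensionAtCommaWhisker (hφ (c.obj x))⟩

end Statement10
end

section
/- Let g : A ⥤ C be a Grothendieck opfibration, f : A ⥤ B, h : C ⥤ B functors, and φ : f ⟶ g ⋙ h a natural transformation exhibiting h as a pointwise left Kan extension of f along g. Then for every category X and every functor c : X ⥤ C, writing P for the strict pullback of g along c (objects: pairs (x, a) with c.obj x = g.obj a; morphisms: pairs (u, v) with c.map u = g.map v modulo object equalities) with projections p : P ⥤ A and q : P ⥤ X, the whiskering of φ with p, as a natural transformation p ⋙ f ⟶ q ⋙ c ⋙ h, exhibits c ⋙ h as a pointwise left Kan extension of p ⋙ f along q. -/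
open CategoryTheory

universe w v v₁ v₂ v₃ v₄ v₅ u u₁ u₂ u₃ u₄ u₅

/-!
At `x : X` the cocone of the statement is the pointwise Kan cocone of `φ` at `c.obj x`,
restricted along the functor `q/x ⥤ g/(c x)` sending `(x', a, u)` to `(a, c u)`, so it is a
colimit once this functor is final. For `d : g/(c x)` the arrows from `d` into this functor
form a connected category: each of them maps to one landing at an object `(x, b, 𝟙 x)`,
obtained by lifting `c u` out of `a`, and the arrow given by an opcartesian lift of `d`
maps to every arrow landing at such an object.
-/

section Opfibration

variable {E : Type u₁} {B : Type u₂} [Category.{v₁} E] [Category.{v₂} B]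

def IsOpcartesianHom (p : E ⥤ B) {e₁ e₂ : E} (α : e₁ ⟶ e₂) : Prop :=
  ∀ (e₃ : E) (α₁ : e₁ ⟶ e₃) (β : p.obj e₂ ⟶ p.obj e₃),
    p.map α₁ = p.map α ≫ β → ∃! γ : e₂ ⟶ e₃, p.map γ = β ∧ α ≫ γ = α₁

lemma IsCartesianHom.isOpcartesianHom_unop {p : E ⥤ B} {e₁ e₂ : Eᵒᵖ} {α : e₁ ⟶ e₂}
    (hα : IsCartesianHom p.op α) : IsOpcartesianHom p α.unop := by
  intro e₃ α₁ β hβ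
  obtain ⟨γ, ⟨hγβ, hγα⟩, hγ_unique⟩ := hα (.op e₃) α₁.op β.op (congrArg Quiver.Hom.op hβ)
  refine ⟨γ.unop, ⟨congrArg Quiver.Hom.unop hγβ, congrArg Quiver.Hom.unop hγα⟩, ?_⟩
  rintro δ ⟨hδβ, hδα⟩
  exact congrArg Quiver.Hom.unop
    (hγ_unique δ.op ⟨congrArg Quiver.Hom.op hδβ, congrArg Quiver.Hom.op hδα⟩)

lemma IsGrothendieckOpfibration.exists_isOpcartesianHom {p : E ⥤ B}
    (hp : IsGrothendieckOpfibration p) (e : E) {b : B} (t : p.obj e ⟶ b) :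
    ∃ (e' : E) (α : e ⟶ e') (h : b = p.obj e'),
      IsOpcartesianHom p α ∧ p.map α = t ≫ eqToHom h := by
  obtain ⟨e', α, h, hα, hαt⟩ := hp (.op e) (.op b) t.op
  refine ⟨e'.unop, α.unop, congrArg Opposite.unop h, hα.isOpcartesianHom_unop, ?_⟩
  have hαt' := congrArg Quiver.Hom.unop hαt
  simp only [unop_comp, eqToHom_unop, Functor.op_map, Quiver.Hom.unop_op] at hαt'
  rw [← hαt']
  simp

end Opfibration

namespace CategoryTheory.Functor.LeftExtension.IsPointwiseLeftKanExtensionAt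

open Limits

variable {P : Type u₁} {X : Type u₂} {A : Type u₃} {C : Type u₄} {B : Type u₅}
  [Category.{v₁} P] [Category.{v₂} X] [Category.{v₃} A] [Category.{v₄} C] [Category.{v₅} B]

noncomputable def pasteOfFinal {p : P ⥤ A} {q : P ⥤ X} {g : A ⥤ C} {c : X ⥤ C}
    (α : p ⋙ g ⟶ q ⋙ c) {f : A ⥤ B} {h : C ⥤ B} {φ : f ⟶ g ⋙ h} {x : X}
    (hφ : (LeftExtension.mk h φ).IsPointwiseLeftKanExtensionAt (c.obj x))
    [(CostructuredArrow.map₂ α (𝟙 (c.obj x))).Final] :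
    (LeftExtension.mk (c ⋙ h)
      (whiskerLeft p φ ≫ whiskerRight α h)).IsPointwiseLeftKanExtensionAt x :=
  ((Final.isColimitWhiskerEquiv (CostructuredArrow.map₂ α (𝟙 (c.obj x))) _).symm hφ).ofIsoColimit
    (Cocone.ext (Iso.refl _) fun e => (Category.comp_id _).trans
      (show φ.app (p.obj e.left) ≫ h.map (α.app e.left ≫ c.map e.hom ≫ 𝟙 _) =
        (φ.app (p.obj e.left) ≫ h.map (α.app e.left)) ≫ h.map (c.map e.hom) by simp))

end CategoryTheory.Functor.LeftExtension.IsPointwiseLeftKanExtensionAt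

section StrictPullbackFinal

variable {X : Type u₁} {A : Type u₂} {C : Type u₃}
  [Category.{v₁} X] [Category.{v₂} A] [Category.{v₃} C] {c : X ⥤ C} {g : A ⥤ C} {x : X}

abbrev StrictPullback.costructuredArrowFunctor (c : X ⥤ C) (g : A ⥤ C) (x : X) :
    CostructuredArrow (strictPullbackFst c g) x ⥤ CostructuredArrow g (c.obj x) :=
  CostructuredArrow.map₂ (strictPullbackComparison c g) (𝟙 (c.obj x))

def StrictPullback.costructuredArrowMkId (b : A) (hb : c.obj x = g.obj b) :
    CostructuredArrow (strictPullbackFst c g) x :=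
  CostructuredArrow.mk (Y := (⟨x, b, hb⟩ : StrictPullback c g)) (𝟙 x)

open StrictPullback

lemma StrictPullback.exists_hom_costructuredArrowMkId (hg : IsGrothendieckOpfibration g)
    (e : CostructuredArrow (strictPullbackFst c g) x) :
    ∃ (b : A) (hb : c.obj x = g.obj b), Nonempty (e ⟶ costructuredArrowMkId b hb) := by
  obtain ⟨b, β, hb, -, hβ⟩ :=
    hg.exists_isOpcartesianHom e.left.snd (eqToHom e.left.eq.symm ≫ c.map e.hom)
  let κ : e.left ⟶ (⟨x, b, hb⟩ : StrictPullback c g) := ⟨e.hom, β, by simp [hβ]⟩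
  exact ⟨b, hb, ⟨CostructuredArrow.homMk κ (Category.comp_id _)⟩⟩

lemma StrictPullback.exists_structuredArrow_hom_mk_costructuredArrowMkId
    (hg : IsGrothendieckOpfibration g) (d : CostructuredArrow g (c.obj x)) :
    ∃ E₀ : StructuredArrow d (costructuredArrowFunctor c g x),
      ∀ (b : A) (hb : c.obj x = g.obj b)
        (m : d ⟶ (costructuredArrowFunctor c g x).obj (costructuredArrowMkId b hb)),
        Nonempty (E₀ ⟶ StructuredArrow.mk m) := by
  obtain ⟨b₀, β₀, hb₀, hβ₀, hβ₀d⟩ := hg.exists_isOpcartesianHom d.left d.hom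
  -- `map₂` is unfolded by hand below: `simp` does not see through `strictPullbackFst c g`.
  refine ⟨StructuredArrow.mk (Y := costructuredArrowMkId b₀ hb₀) (CostructuredArrow.homMk β₀
    (show g.map β₀ ≫ eqToHom hb₀.symm ≫ c.map (𝟙 x) ≫ 𝟙 _ = d.hom by simp [hβ₀d])), ?_⟩
  intro b hb m
  have hm : g.map (Y := b) m.left = g.map β₀ ≫ eqToHom (hb₀.symm.trans hb) := by
    have hw : g.map (Y := b) m.left ≫ eqToHom hb.symm ≫ c.map (𝟙 x) ≫ 𝟙 _ = d.hom :=
      CostructuredArrow.w m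
    simp [hβ₀d, ← hw]
  obtain ⟨γ, ⟨hγ, hβ₀γ⟩, -⟩ := hβ₀ b m.left _ hm
  let κ : (⟨x, b₀, hb₀⟩ : StrictPullback c g) ⟶ ⟨x, b, hb⟩ := ⟨𝟙 x, γ, by simp [hγ]⟩
  exact ⟨StructuredArrow.homMk (CostructuredArrow.homMk κ (Category.comp_id _))
    (by ext; exact hβ₀γ)⟩

lemma IsGrothendieckOpfibration.final_strictPullbackCostructuredArrowFunctor
    (hg : IsGrothendieckOpfibration g) (c : X ⥤ C) (x : X) :
    (costructuredArrowFunctor c g x).Final := by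
  refine ⟨fun d => ?_⟩
  obtain ⟨E₀, hE₀⟩ := exists_structuredArrow_hom_mk_costructuredArrowMkId hg d
  have zigzag_E₀ (E : StructuredArrow d _) : Zigzag E E₀ := by
    obtain ⟨b, hb, ⟨κ⟩⟩ := exists_hom_costructuredArrowMkId hg E.right
    obtain ⟨κ₀⟩ := hE₀ b hb _
    exact .of_hom_inv (StructuredArrow.homMk' E κ) κ₀
  have : Nonempty (StructuredArrow d _) := ⟨E₀⟩
  exact zigzag_isConnected fun E₁ E₂ => (zigzag_E₀ E₁).trans (zigzag_E₀ E₂).symm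

end StrictPullbackFinal

section Statement11

variable {A : Type u₁} {C : Type u₂} {B : Type u₃}
variable [Category.{v₁} A] [Category.{v₂} C] [Category.{v₃} B]

/-- Let `g : A ⥤ C` be a Grothendieck opfibration and let
`φ : f ⟶ g ⋙ h` exhibit `h` as a pointwise left Kan extension of `f` along `g`.  Then for
every category `X` and functor `c : X ⥤ C`, the whiskering of `φ` with the projection `p`
of the strict pullback of `g` along `c` exhibits `c ⋙ h` as a pointwise left Kan extension
of `p ⋙ f` along the projection `q` to `X`. -/
theorem stmt11 (g : A ⥤ C) (f : A ⥤ B) (h : C ⥤ B)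
    (hg : IsGrothendieckOpfibration g) (φ : f ⟶ g ⋙ h)
    (hφ : (Functor.LeftExtension.mk h φ).IsPointwiseLeftKanExtension)
    (X : Type u₄) [Category.{v₄} X] (c : X ⥤ C) :
    Nonempty (Functor.LeftExtension.mk (c ⋙ h)
      (strictPullbackWhisker c g f h φ)).IsPointwiseLeftKanExtension :=
  ⟨fun x =>
    have := hg.final_strictPullbackCostructuredArrowFunctor c x
    (hφ (c.obj x)).pasteOfFinal (strictPullbackComparison c g)⟩

end Statement11
end

section
/- Let X be a category and let F, G : X ⥤ Type u be functors. The map sending a natural transformation α : F ⟶ G to the functor Elements F ⥤ Elements G given on objects by (x, s) ↦ (x, α.app x s) and acting as the identity on underlying morphisms of X, is a bijection from the set of natural transformations F ⟶ G to the set of functors H : Elements F ⥤ Elements G satisfying π_G ∘ H = π_F. (In the language of the paper: the forgetful functor from pointed sets to sets is a classifying discrete opfibration for CAT, i.e. the Grothendieck-construction functor from CAT(X, Set) to discrete opfibrations over X is fully faithful.) -/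
/-!
A functor `H` over `X` sends `(x, s)` to some `(x, t)` and acts as the identity on underlying
morphisms (up to the `eqToHom`s forced by `H ⋙ π G = π F` holding only propositionally).
Reading off `t` defines the components of a transformation `F ⟶ G`, whose naturality square at
`u : x ⟶ y` is the image under `H` of the morphism `(x, s) ⟶ (y, F.map u s)` given by `u`.
Injectivity holds because `map α` already records `α.app x s` on objects.
-/

open CategoryTheory

universe w v u

namespace CategoryTheory.CategoryOfElements

variable {X : Type v} [Category.{w} X] {F G : X ⥤ Type u}

theorem eqToHom_val {p q : F.Elements} (h : p = q) :
    (eqToHom h).val = eqToHom (congrArg Sigma.fst h) := by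
  subst h
  rfl

theorem map_injective : Function.Injective (map : (F ⟶ G) → F.Elements ⥤ G.Elements) := by
  intro α β h
  ext x s
  have hxs : (⟨x, α.app x s⟩ : G.Elements) = ⟨x, β.app x s⟩ := Functor.congr_obj h ⟨x, s⟩
  exact eq_of_heq (Sigma.mk.inj_iff.mp hxs).2

variable {H : F.Elements ⥤ G.Elements}

theorem fst_obj_of_comp_π_eq (hH : H ⋙ π G = π F) (p : F.Elements) : (H.obj p).1 = p.1 :=
  Functor.congr_obj hH p

theorem val_map_of_comp_π_eq (hH : H ⋙ π G = π F) {p q : F.Elements} (f : p ⟶ q) :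
    (H.map f).val = eqToHom (fst_obj_of_comp_π_eq hH p) ≫ f.val ≫
      eqToHom (fst_obj_of_comp_π_eq hH q).symm := by
  have h := Functor.congr_hom hH f
  simp only [Functor.comp_map, π_map] at h
  exact h

def natTransOfCompπEq (hH : H ⋙ π G = π F) : F ⟶ G where
  app x := TypeCat.ofHom fun s =>
    G.map (eqToHom (fst_obj_of_comp_π_eq hH ⟨x, s⟩)) (H.obj ⟨x, s⟩).2
  naturality x y u := by
    refine ConcreteCategory.hom_ext _ _ fun s => ?_
    have h1 := (H.map (homMk (F.elementsMk x s) (F.elementsMk y (F.map u s)) u rfl)).property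
    rw [val_map_of_comp_π_eq hH] at h1
    simp only [types_comp_apply, Functor.map_comp_apply,
      homMk_coe, TypeCat.ofHom_apply] at h1 ⊢
    rw [← h1]
    simp

theorem map_natTransOfCompπEq (hH : H ⋙ π G = π F) : map (natTransOfCompπEq hH) = H := by
  symm
  fapply Functor.ext
  · rintro ⟨x, s⟩
    refine Functor.Elements.ext _ _ (fst_obj_of_comp_π_eq hH _) ?_
    simp only [natTransOfCompπEq, map, TypeCat.hom_ofHom, TypeCat.Fun.coe_mk]
    rfl
  · intro p q f
    apply ext
    rw [val_map_of_comp_π_eq hH f]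
    simp only [comp_val, eqToHom_val]
    rfl

end CategoryTheory.CategoryOfElements

/-- For functors `F, G : X ⥤ Type u`, the assignment sending a natural
transformation `α : F ⟶ G` to the induced functor `Elements F ⥤ Elements G` over `X`
(given by `(x, s) ↦ (x, α.app x s)` and the identity on underlying morphisms) is a
bijection onto the set of functors `H : Elements F ⥤ Elements G` with
`H ⋙ π_G = π_F`.  (The forgetful functor from pointed sets is a classifying discrete
opfibration: the Grothendieck construction is fully faithful.) -/
theorem stmt12 {X : Type v} [Category.{w} X] (F G : X ⥤ Type u) :
    Function.Bijective
      (fun α : F ⟶ G =>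
        (⟨CategoryOfElements.map α, CategoryOfElements.map_π α⟩ :
          {H : F.Elements ⥤ G.Elements //
            H ⋙ CategoryOfElements.π G = CategoryOfElements.π F})) :=
  ⟨fun _ _ h => CategoryOfElements.map_injective (congrArg Subtype.val h),
    fun ⟨_, hH⟩ => ⟨CategoryOfElements.natTransOfCompπEq hH,
      Subtype.ext (CategoryOfElements.map_natTransOfCompπEq hH)⟩⟩
end

section
/- Let A be a category and f : A ⥤ Type u a functor. For each category X, let G_X be the functor from the functor category of functors X ⥤ A to the category whose objects are functors into X and whose morphisms are functors commuting strictly with the projections to X, defined as follows: G_X sends g : X ⥤ A to the projection π : Elements (g ⋙ f) ⥤ X, and sends a natural transformation θ : g₁ ⟶ g₂ to the functor Elements (g₁ ⋙ f) ⥤ Elements (g₂ ⋙ f) given by (x, s) ↦ (x, f.map (θ.app x) s) and the identity on underlying morphisms. Then G_X is fully faithful for every category X if and only if f is fully faithful. -/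
/-!
A functor `H : F.Elements ⥤ G.Elements` over `X` moves each element `(x, s)` to an element over
`x`, so it is a family of maps `F.obj x → G.obj x`; its action on the morphisms
`(x, s) ⟶ (y, F.map v s)` makes this family natural, and a functor over `X` is determined by its
action on objects. Hence functors over `X` are exactly the `CategoryOfElements.map θ`, and `G_X`
is fully faithful precisely when whiskering by `f` is. That holds when `f` is fully faithful;
conversely, on constant functors out of a connected category, whiskering by `f` is `f.map`.
-/

open CategoryTheory

universe w v u ux vx

namespace CategoryTheory

lemma Functor.ext_of_comp_faithful {C D E : Type*} [Category C] [Category D] [Category E]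
    (P : D ⥤ E) [P.Faithful] {H H' : C ⥤ D} (h : H ⋙ P = H' ⋙ P)
    (hobj : ∀ c, H.obj c = H'.obj c) : H = H' :=
  Functor.ext hobj fun _ _ m => P.map_injective (by simpa [eqToHom_map] using Functor.congr_hom h m)

namespace CategoryOfElements

variable {X : Type*} [Category X] {F G : X ⥤ Type u}

def mapOver (θ : F ⟶ G) : {H : F.Elements ⥤ G.Elements // H ⋙ π G = π F} :=
  ⟨map θ, map_π θ⟩

lemma mapOver_injective : Function.Injective (mapOver : (F ⟶ G) → _) := by
  intro θ ψ h
  ext x s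
  exact eq_of_heq (Sigma.ext_iff.mp (Functor.congr_obj (congrArg Subtype.val h) ⟨x, s⟩)).2

section

variable {H : F.Elements ⥤ G.Elements} (hH : H ⋙ π G = π F)
include hH

lemma fst_obj_of_comp_π (p : F.Elements) : (H.obj p).1 = p.1 :=
  Functor.congr_obj hH p

lemma val_map_of_comp_π {p q : F.Elements} (m : p ⟶ q) :
    (H.map m).val = eqToHom (fst_obj_of_comp_π hH p) ≫ m.val ≫
      eqToHom (fst_obj_of_comp_π hH q).symm := by
  have h := Functor.congr_hom hH m
  simp only [Functor.comp_map, π_map] at h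
  exact h

/-- `H.obj ⟨x, s⟩` lies over `x` only up to a propositional equality, hence the transport. -/
def natTransOfCompπ : F ⟶ G where
  app x := TypeCat.ofHom fun s =>
    G.map (eqToHom (fst_obj_of_comp_π hH (F.elementsMk x s))) (H.obj (F.elementsMk x s)).2
  naturality x y v := by
    ext s
    let m : F.elementsMk x s ⟶ F.elementsMk y (F.map v s) := ⟨v, rfl⟩
    have hm := map_snd (H.map m)
    rw [val_map_of_comp_π hH m] at hm
    simp only [TypeCat.Fun.toFun_apply, types_comp_apply, TypeCat.ofHom_apply, ← hm,
      ← Functor.map_comp_apply, Category.assoc, eqToHom_trans, eqToHom_refl, Category.comp_id]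
    rfl

lemma mapOver_natTransOfCompπ : mapOver (natTransOfCompπ hH) = ⟨H, hH⟩ :=
  Subtype.ext <| Functor.ext_of_comp_faithful (π G) ((map_π _).trans hH.symm) fun p =>
    (Functor.Elements.ext _ _ (fst_obj_of_comp_π hH p) rfl).symm

end

lemma mapOver_bijective : Function.Bijective (mapOver : (F ⟶ G) → _) :=
  ⟨mapOver_injective, fun ⟨_, hH⟩ => ⟨_, mapOver_natTransOfCompπ hH⟩⟩

end CategoryOfElements

section

variable {X : Type*} [Category X] [IsConnected X] {C D : Type*} [Category C] [Category D]

lemma bijective_app_const_comp (F : C ⥤ D) (a a' : C) (x₀ : X) :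
    Function.Bijective
      fun θ : (Functor.const X).obj a ⋙ F ⟶ (Functor.const X).obj a' ⋙ F => θ.app x₀ := by
  refine ⟨fun θ ψ h => ?_, fun u => ⟨⟨fun _ => u, by simp⟩, rfl⟩⟩
  have hconst (θ : (Functor.const X).obj a ⋙ F ⟶ (Functor.const X).obj a' ⋙ F) (x : X) :
      θ.app x = θ.app x₀ :=
    constant_of_preserves_morphisms (α := F.obj a ⟶ F.obj a') (fun x => θ.app x)
      (fun _ _ v => by simpa using (θ.naturality v).symm) x x₀
  ext x
  rw [hconst θ, hconst ψ]
  exact h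

lemma Functor.map_bijective_of_bijective_whiskerRight (F : C ⥤ D) {a a' : C}
    (h : Function.Bijective
      fun θ : (Functor.const X).obj a ⟶ (Functor.const X).obj a' => Functor.whiskerRight θ F) :
    Function.Bijective (F.map : (a ⟶ a') → _) :=
  (bijective_app_const_comp F a a' (Classical.arbitrary X)).comp <|
    h.comp ((Functor.FullyFaithful.ofFullyFaithful (Functor.const X)).map_bijective a a')

end

end CategoryTheory

/-- For a functor `f : A ⥤ Type u`, the Grothendieck-construction
functors `G_X` (sending `g : X ⥤ A` to the discrete opfibration
`π : Elements (g ⋙ f) ⥤ X`, and `θ : g₁ ⟶ g₂` to the induced functor over `X`) are fully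
faithful for every category `X` if and only if `f` is fully faithful. -/
theorem stmt13 {A : Type v} [Category.{w} A] (f : A ⥤ Type u) :
    (∀ (X : Type ux) [Category.{vx} X] (g₁ g₂ : X ⥤ A),
        Function.Bijective
          (fun θ : g₁ ⟶ g₂ =>
            (⟨CategoryOfElements.map (Functor.whiskerRight θ f),
              CategoryOfElements.map_π (Functor.whiskerRight θ f)⟩ :
              {H : (g₁ ⋙ f).Elements ⥤ (g₂ ⋙ f).Elements //
                H ⋙ CategoryOfElements.π (g₂ ⋙ f) = CategoryOfElements.π (g₁ ⋙ f)}))) ↔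
      ∀ a a' : A, Function.Bijective (fun φ : a ⟶ a' => f.map φ) := by
  constructor
  · intro hG a a'
    let X := ULiftHom.{vx} (ULift.{ux} (Discrete PUnit.{1}))
    have hX := hG X ((Functor.const X).obj a) ((Functor.const X).obj a')
    exact f.map_bijective_of_bijective_whiskerRight
      ((CategoryOfElements.mapOver_bijective.of_comp_iff' _).mp hX)
  · intro hf X _ g₁ g₂
    obtain ⟨hff⟩ := (Functor.FullyFaithful.nonempty_iff_map_bijective f).mpr hf
    exact CategoryOfElements.mapOver_bijective.comp ((hff.whiskeringRight X).map_bijective g₁ g₂)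
end

section
/- Let A, B, C be locally small categories (hom-sets in Type u), let g : A ⥤ B, h : B ⥤ C, f : A ⥤ C be functors, and let φ : f ⟶ g ⋙ h be a natural transformation. Define B(g,1) : B ⥤ (Aᵒᵖ ⥤ Type u) by b ↦ (a ↦ Hom_B(g.obj a, b)), define C(f,1) : C ⥤ (Aᵒᵖ ⥤ Type u) by c ↦ (a ↦ Hom_C(f.obj a, c)), and define φ' : B(g,1) ⟶ h ⋙ C(f,1) by ((φ'.app b).app a)(β) = φ.app a ≫ h.map β for β : g.obj a ⟶ b. Then φ exhibits h as a left Kan extension of f along g if and only if φ' exhibits h as a left lifting of B(g,1) along C(f,1). -/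
open CategoryTheory Opposite

universe u v₁ v₂ v₃ u₁ u₂ u₃ ux vx

section HomFunctor

variable {A : Type u₁} {B : Type u₂} {C : Type u₃}
variable [Category.{u} A] [Category.{u} B] [Category.{u} C]

/-- The functor `B(g,1) : B ⥤ (Aᵒᵖ ⥤ Type u)`, `b ↦ (a ↦ Hom_B(g.obj a, b))`. -/
def homFunctor (g : A ⥤ B) : B ⥤ (Aᵒᵖ ⥤ Type u) where
  obj b :=
    { obj := fun a => (g.obj a.unop ⟶ b)
      map := fun m => TypeCat.ofHom fun β => g.map m.unop ≫ β }
  map k := { app := fun a => TypeCat.ofHom fun β => β ≫ k }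

/-- The 2-cell `φ' : B(g,1) ⟶ h ⋙ C(f,1)` associated to `φ : f ⟶ g ⋙ h`, with
components `β ↦ φ.app a ≫ h.map β`. -/
def primeTrans (g : A ⥤ B) (h : B ⥤ C) (f : A ⥤ C) (φ : f ⟶ g ⋙ h) :
    homFunctor g ⟶ h ⋙ homFunctor f where
  app b :=
    { app := fun a => TypeCat.ofHom fun β => φ.app a.unop ≫ h.map β
      naturality := by
        intro a a' m
        ext β
        have hn := φ.naturality m.unop
        dsimp [homFunctor] at *
        change g.obj a.unop ⟶ b at β
        change φ.app a'.unop ≫ h.map (g.map m.unop ≫ (β : g.obj a.unop ⟶ b)) =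
          f.map m.unop ≫ φ.app a.unop ≫ h.map (β : g.obj a.unop ⟶ b)
        rw [Functor.map_comp, ← Category.assoc, ← hn, Category.assoc] }
  naturality := by
    intro b b' k
    ext a β
    dsimp [homFunctor]
    change g.obj a.unop ⟶ b at β
    change φ.app a.unop ≫ h.map ((β : g.obj a.unop ⟶ b) ≫ k) =
      (φ.app a.unop ≫ h.map (β : g.obj a.unop ⟶ b)) ≫ h.map k
    rw [Functor.map_comp, Category.assoc]

end HomFunctor

section Liftings

variable {B : Type u₁} {C : Type u₂} {P : Type u₃}
variable [Category.{v₁} B] [Category.{v₂} C] [Category.{v₃} P]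

/-- `ψ : s ⟶ h ⋙ t` exhibits `h` as a left lifting of `s` along `t` when for every
`k : B ⥤ C` pasting with `ψ` is a bijection from 2-cells `h ⟶ k` to 2-cells
`s ⟶ k ⋙ t`. -/
def ExhibitsLeftLifting (s : B ⥤ P) (h : B ⥤ C) (t : C ⥤ P) (ψ : s ⟶ h ⋙ t) : Prop :=
  ∀ k : B ⥤ C, Function.Bijective fun δ : h ⟶ k => ψ ≫ Functor.whiskerRight δ t

end Liftings

/-!
By Yoneda, a 2-cell `Ψ : B(g,1) ⟶ k ⋙ C(f,1)` is determined by its values on identities,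
`Ψ β = Ψ (𝟙) ≫ k.map β`, so `γ ↦ γ'` is a bijection
`(f ⟶ g ⋙ k) ≃ (B(g,1) ⟶ k ⋙ C(f,1))`.
Under it, pasting `δ : h ⟶ k` onto `φ'` corresponds to pasting `δ` onto `φ`, so the universal
property of the left lifting is literally that of the left Kan extension.
-/

namespace CategoryTheory.Functor

open Limits

lemma isLeftKanExtension_iff_bijective {C D H : Type*} [Category C] [Category D] [Category H]
    (F' : D ⥤ H) {L : C ⥤ D} {F : C ⥤ H} (α : F ⟶ L ⋙ F') :
    F'.IsLeftKanExtension α ↔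
      ∀ G : D ⥤ H, Function.Bijective fun β : F' ⟶ G => α ≫ whiskerLeft L β := by
  refine ⟨fun _ G => (homEquivOfIsLeftKanExtension F' α G).bijective, fun hbij => ?_⟩
  choose desc fac using fun Y : LeftExtension L F => (hbij Y.right).2 Y.hom
  exact ⟨⟨IsInitial.ofUniqueHom (fun Y => StructuredArrow.homMk (desc Y) (fac Y))
    fun Y m => StructuredArrow.ext _ _ <| (hbij Y.right).1 <|
      (StructuredArrow.w m).trans (fac Y).symm⟩⟩

end CategoryTheory.Functor

section Yoneda

variable {A : Type u₁} {B : Type u₂} {C : Type u₃}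
variable [Category.{u} A] [Category.{u} B] [Category.{u} C]
variable {g : A ⥤ B} {f : A ⥤ C} {k : B ⥤ C}

lemma homFunctor_natTrans_app_eq_id_comp (Ψ : homFunctor g ⟶ k ⋙ homFunctor f) (b : B)
    (a : Aᵒᵖ) (β : g.obj a.unop ⟶ b) :
    (Ψ.app b).app a β = (Ψ.app (g.obj a.unop)).app a (𝟙 _) ≫ k.map β := by
  have := types_congr_hom (NatTrans.congr_app (Ψ.naturality β) a) (𝟙 (g.obj a.unop))
  exact (congr_arg (ConcreteCategory.hom ((Ψ.app b).app a)) (Category.id_comp β).symm).trans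
    this

lemma homFunctor_natTrans_app_map_comp (Ψ : homFunctor g ⟶ k ⋙ homFunctor f) (b : B)
    {a a' : A} (m : a ⟶ a') (β : g.obj a' ⟶ b) :
    (Ψ.app b).app (op a) (g.map m ≫ β) = f.map m ≫ (Ψ.app b).app (op a') β :=
  NatTrans.naturality_apply (Ψ.app b) m.op β

variable (g f k) in
def primeTransEquiv : (f ⟶ g ⋙ k) ≃ (homFunctor g ⟶ k ⋙ homFunctor f) where
  toFun γ := primeTrans g k f γ
  invFun Ψ :=
    { app a := (Ψ.app (g.obj a)).app (op a) (𝟙 _)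
      naturality a a' m := by
        dsimp
        rw [← homFunctor_natTrans_app_map_comp, Category.comp_id,
          homFunctor_natTrans_app_eq_id_comp] }
  left_inv γ := by
    ext a
    show γ.app a ≫ k.map (𝟙 _) = γ.app a
    simp
  right_inv Ψ := by
    ext b a β
    exact (homFunctor_natTrans_app_eq_id_comp Ψ b a β).symm

lemma primeTrans_comp_whiskerRight (h : B ⥤ C) (φ : f ⟶ g ⋙ h) (δ : h ⟶ k) :
    primeTrans g h f φ ≫ Functor.whiskerRight δ (homFunctor f) =
      primeTrans g k f (φ ≫ Functor.whiskerLeft g δ) := by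
  ext b a (β : g.obj a.unop ⟶ b)
  show (φ.app a.unop ≫ h.map β) ≫ δ.app b = (φ.app a.unop ≫ δ.app _) ≫ k.map β
  simp

end Yoneda

/-- `φ : f ⟶ g ⋙ h` exhibits `h` as a left Kan extension of `f` along
`g` if and only if `φ' : B(g,1) ⟶ h ⋙ C(f,1)` exhibits `h` as a left lifting of `B(g,1)`
along `C(f,1)`. -/
theorem stmt15 {A : Type u₁} {B : Type u₂} {C : Type u₃}
    [Category.{u} A] [Category.{u} B] [Category.{u} C]
    (g : A ⥤ B) (h : B ⥤ C) (f : A ⥤ C) (φ : f ⟶ g ⋙ h) :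
    h.IsLeftKanExtension φ ↔
      ExhibitsLeftLifting (homFunctor g) h (homFunctor f) (primeTrans g h f φ) := by
  rw [Functor.isLeftKanExtension_iff_bijective]
  refine forall_congr' fun k => ?_
  rw [← (primeTransEquiv g f k).comp_bijective]
  exact iff_of_eq (congrArg _ (funext (primeTrans_comp_whiskerRight h φ))).symm
end

section
/- Let C be a small category, M and A locally small categories (hom-sets in Type u), i : M ⥤ (Cᵒᵖ ⥤ Type u), f : C ⥤ A and k : M ⥤ A functors. Let y_C : C ⥤ (Cᵒᵖ ⥤ Type u) be the Yoneda embedding and let y_C/i = Comma y_C i, with projections p : y_C/i ⥤ C and q : y_C/i ⥤ M; by the Yoneda lemma its objects may be identified with triples (c, m, x) where x ∈ (i.obj m).obj c. Define A(f,1) : A ⥤ (Cᵒᵖ ⥤ Type u) by a ↦ (c ↦ Hom_A(f.obj c, a)). Given a natural transformation η' : p ⋙ f ⟶ q ⋙ k, let η : i ⟶ k ⋙ A(f,1) be the natural transformation whose component at m, evaluated at c, sends x ∈ (i.obj m).obj c to η'.app (c, m, x) : f.obj c ⟶ k.obj m. Then η exhibits k as an absolute left lifting of i along A(f,1) if and only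 if η' exhibits k as a pointwise left Kan extension of p ⋙ f along q. -/
/-!
Both sides are pointwise conditions. `η` exhibits an absolute left lifting iff for every `m`
and `a` the map `(k m ⟶ a) → (i m ⟶ A(f,1) a)`, `g ↦ η_m ≫ A(f,1) g`, is bijective: one
direction tests the lifting property on a one-object category, the other assembles the
componentwise inverses into a natural transformation. `η'` is pointwise at `m` iff
`g ↦ (coconeAt m).ι ≫ g` is a bijection from `k m ⟶ a` onto cocones over `q/m` with vertex `a`.
By the Yoneda lemma such a cocone is the same as a presheaf map `i m ⟶ A(f,1) a`, because each
leg at `(c, m', x, h : m' ⟶ m)` equals the leg at `(c, m, i(h) ∘ x, 𝟙)`; under this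
identification the second map becomes the first.
-/

open CategoryTheory Opposite

universe u v₁ v₂ v₃ u₁ u₂ u₃ ux vx

/-- `ψ : s ⟶ h ⋙ t` exhibits `h` as an absolute left lifting of `s` along `t` when for
every category `X` and all functors `x : X ⥤ B`, `k : X ⥤ C`, pasting with the whiskering
of `ψ` by `x` is a bijection from 2-cells `x ⋙ h ⟶ k` to 2-cells `x ⋙ s ⟶ k ⋙ t`. -/
def ExhibitsAbsoluteLeftLifting.{xu, xv, bu, bv, cu, cv, pu, pv}
    {B : Type bu} {C : Type cu} {P : Type pu}
    [Category.{bv} B] [Category.{cv} C] [Category.{pv} P]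
    (s : B ⥤ P) (h : B ⥤ C) (t : C ⥤ P) (ψ : s ⟶ h ⋙ t) : Prop :=
  ∀ (X : Type xu) [Category.{xv} X] (x : X ⥤ B) (k : X ⥤ C),
    Function.Bijective fun δ : x ⋙ h ⟶ k => Functor.whiskerLeft x ψ ≫ Functor.whiskerRight δ t

section Statement18

variable {C : Type u} [SmallCategory C] {M : Type u₁} [Category.{u} M]
variable {A : Type u₂} [Category.{u} A]

/-- The 2-cell `η : i ⟶ k ⋙ A(f,1)` associated to `η' : p ⋙ f ⟶ q ⋙ k`, with
component at `m`, evaluated at `c`, sending `x ∈ (i.obj m).obj c` to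
`η'.app (c, m, x) : f.obj c.unop ⟶ k.obj m` (identifying, via the Yoneda lemma, the
objects of the comma category `y_C/i` with triples `(c, m, x)`). -/
def etaOf (i : M ⥤ Cᵒᵖ ⥤ Type u) (f : C ⥤ A) (k : M ⥤ A)
    (η' : Comma.fst yoneda i ⋙ f ⟶ Comma.snd yoneda i ⋙ k) :
    i ⟶ k ⋙ homFunctor f where
  app m :=
    { app := fun c => TypeCat.ofHom fun x => η'.app { left := unop c, right := m, hom := yonedaEquiv.symm x }
      naturality := by
        intro c c' γ
        ext x
        have hn := η'.naturality
          (X := Comma.mk (L := yoneda) (unop c') m (yonedaEquiv.symm ((i.obj m).map γ x)))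
          (Y := Comma.mk (L := yoneda) (unop c) m (yonedaEquiv.symm x))
          ⟨γ.unop, 𝟙 m, by
            rw [CategoryTheory.Functor.map_id, Category.comp_id]
            exact yonedaEquiv_symm_naturality_left γ.unop (i.obj m) x⟩
        dsimp [homFunctor] at hn ⊢
        simp only [Comma.fst_map, Comma.snd_map, CategoryTheory.Functor.map_id, Category.comp_id] at hn
        rw [hn]
        erw [k.map_id, Category.comp_id] }
  naturality := by
    intro m m' μ
    ext c x
    have hn := η'.naturality
      (X := Comma.mk (L := yoneda) (unop c) m (yonedaEquiv.symm x))
      (Y := Comma.mk (L := yoneda) (unop c) m' (yonedaEquiv.symm ((i.map μ).app c x)))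
      ⟨𝟙 (unop c), μ, by
        rw [CategoryTheory.Functor.map_id, Category.id_comp]
        exact (yonedaEquiv_symm_naturality_right (unop c) (i.map μ) x).symm⟩
    dsimp [homFunctor] at hn ⊢
    simp only [Comma.fst_map, Comma.snd_map, CategoryTheory.Functor.map_id, Category.id_comp] at hn
    rw [← hn]
    erw [f.map_id, Category.id_comp]

end Statement18

section AbsoluteLeftLifting

variable {B : Type u₁} {C : Type u₂} {P : Type u₃} [Category.{v₁} B] [Category.{v₂} C]
  [Category.{v₃} P] {s : B ⥤ P} {h : B ⥤ C} {t : C ⥤ P} {ψ : s ⟶ h ⋙ t}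

attribute [local instance] uliftCategory in
theorem ExhibitsAbsoluteLeftLifting.bijective_app
    (H : ExhibitsAbsoluteLeftLifting.{ux, vx} s h t ψ) (b : B) (c : C) :
    Function.Bijective fun g : h.obj b ⟶ c => ψ.app b ≫ t.map g := by
  -- a one-object category with objects in `Type ux` and morphisms in `Type vx`, as `H` requires
  let X := ULift.{ux} (SingleObj PUnit.{vx + 1})
  let star : X := ⟨SingleObj.star _⟩
  obtain ⟨hinj, hsurj⟩ := H X ((Functor.const X).obj b) ((Functor.const X).obj c)
  refine ⟨fun g g' hg => ?_, fun φ => ?_⟩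
  · have := hinj (a₁ := { app := fun _ => g }) (a₂ := { app := fun _ => g' })
      (NatTrans.ext (funext fun _ => hg))
    exact congr_arg (NatTrans.app · star) this
  · obtain ⟨δ, hδ⟩ := hsurj { app := fun _ => φ }
    exact ⟨δ.app star, congr_arg (NatTrans.app · star) hδ⟩

theorem exhibitsAbsoluteLeftLifting_of_bijective
    (H : ∀ b c, Function.Bijective fun g : h.obj b ⟶ c => ψ.app b ≫ t.map g) :
    ExhibitsAbsoluteLeftLifting.{ux, vx} s h t ψ := by
  intro X _ x l
  refine ⟨fun δ δ' hδ => ?_, fun Ψ => ?_⟩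
  · ext X₀
    exact (H _ _).1 (congr_arg (NatTrans.app · X₀) hδ)
  · choose δ hδ using fun X₀ => (H (x.obj X₀) (l.obj X₀)).2 (Ψ.app X₀)
    beta_reduce at hδ
    refine ⟨{ app := δ, naturality := fun X₀ X₁ θ => (H _ _).1 ?_ }, NatTrans.ext (funext hδ)⟩
    have hψ : s.map (x.map θ) ≫ ψ.app (x.obj X₁) = ψ.app (x.obj X₀) ≫ t.map (h.map (x.map θ)) :=
      ψ.naturality (x.map θ)
    calc ψ.app (x.obj X₀) ≫ t.map (h.map (x.map θ) ≫ δ X₁)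
        = s.map (x.map θ) ≫ Ψ.app X₁ := by
          rw [t.map_comp, ← Category.assoc, ← hψ, Category.assoc, hδ]
      _ = Ψ.app X₀ ≫ t.map (l.map θ) := Ψ.naturality θ
      _ = ψ.app (x.obj X₀) ≫ t.map (δ X₀ ≫ l.map θ) := by rw [← hδ, t.map_comp, Category.assoc]

theorem exhibitsAbsoluteLeftLifting_iff_bijective :
    ExhibitsAbsoluteLeftLifting.{ux, vx} s h t ψ ↔
      ∀ b c, Function.Bijective fun g : h.obj b ⟶ c => ψ.app b ≫ t.map g :=
  ⟨ExhibitsAbsoluteLeftLifting.bijective_app, exhibitsAbsoluteLeftLifting_of_bijective⟩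

end AbsoluteLeftLifting

namespace CategoryTheory.Limits.Cocone

theorem nonempty_isColimit_iff_bijective {J : Type u₁} [Category.{v₁} J]
    {C : Type u₂} [Category.{v₂} C] {F : J ⥤ C} (c : Cocone F) :
    Nonempty (IsColimit c) ↔
      ∀ W : C, Function.Bijective fun g : c.pt ⟶ W => c.ι ≫ (Functor.const J).map g := by
  refine ⟨fun ⟨hc⟩ W => hc.homEquiv.bijective, fun H => ⟨IsColimit.ofExistsUnique fun s => ?_⟩⟩
  obtain ⟨g, hg⟩ := (H s.pt).2 s.ι
  refine ⟨g, fun j => congr_arg (NatTrans.app · j) hg, fun g' hg' => (H s.pt).1 ?_⟩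
  rw [hg]
  ext j
  exact hg' j

end CategoryTheory.Limits.Cocone

section Statement18

variable {C : Type u} [SmallCategory C] {M : Type u₁} [Category.{u} M]
variable {A : Type u₂} [Category.{u} A]

theorem homFunctor.map_comp_yonedaEquiv {f : C ⥤ A} {a : A} {c c' : C} (γ : c ⟶ c')
    (α : yoneda.obj c' ⟶ (homFunctor f).obj a) :
    f.map γ ≫ yonedaEquiv α = yonedaEquiv (yoneda.map γ ≫ α) :=
  yonedaEquiv_naturality α γ

namespace YonedaComma

variable (i : M ⥤ Cᵒᵖ ⥤ Type u) {f : C ⥤ A} {m : M} {a : A}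

abbrev ofElement {c : C} (α : yoneda.obj c ⟶ i.obj m) :
    CostructuredArrow (Comma.snd yoneda i) m :=
  CostructuredArrow.mk (Y := Comma.mk c m α) (𝟙 m)

def ofElementMap {c c' : C} (γ : c ⟶ c') (α : yoneda.obj c' ⟶ i.obj m) :
    ofElement i (yoneda.map γ ≫ α) ⟶ ofElement i α :=
  CostructuredArrow.homMk ⟨γ, 𝟙 m, by simp⟩ (Category.comp_id _)

def toOfElement (j : CostructuredArrow (Comma.snd yoneda i) m) :
    j ⟶ ofElement i (j.left.hom ≫ i.map j.hom) :=
  CostructuredArrow.homMk ⟨𝟙 _, j.hom, by simp⟩ (Category.comp_id _)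

variable {i}
  (τ : CostructuredArrow.proj (Comma.snd yoneda i) m ⋙ Comma.fst yoneda i ⋙ f ⟶
    (Functor.const _).obj a)

theorem map_comp_app {j j' : CostructuredArrow (Comma.snd yoneda i) m} (ψ : j ⟶ j') :
    f.map ψ.left.left ≫ τ.app j' = τ.app j :=
  (Limits.Cocone.mk a τ).w ψ

theorem app_eq_app_ofElement (j : CostructuredArrow (Comma.snd yoneda i) m) :
    τ.app j = τ.app (ofElement i (j.left.hom ≫ i.map j.hom)) := by
  rw [← map_comp_app τ (toOfElement i j)]
  change f.map (𝟙 _) ≫ _ = _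
  rw [f.map_id]
  exact Category.id_comp _

theorem app_ofElement_yoneda_map {c c' : C} (γ : c ⟶ c') (α : yoneda.obj c' ⟶ i.obj m) :
    τ.app (ofElement i (yoneda.map γ ≫ α)) = f.map γ ≫ τ.app (ofElement i α) :=
  (map_comp_app τ (ofElementMap i γ α)).symm

def coconesEquiv :
    (CostructuredArrow.proj (Comma.snd yoneda i) m ⋙ Comma.fst yoneda i ⋙ f ⟶
      (Functor.const _).obj a) ≃ (i.obj m ⟶ (homFunctor f).obj a) where
  toFun τ :=
    { app c := TypeCat.ofHom fun x => τ.app (ofElement i (yonedaEquiv.symm x))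
      naturality c c' γ := by
        ext x
        change τ.app (ofElement i (yonedaEquiv.symm ((i.obj m).map γ x))) =
          f.map γ.unop ≫ τ.app (ofElement i (yonedaEquiv.symm x))
        have := app_ofElement_yoneda_map τ γ.unop (yonedaEquiv.symm x)
        rwa [yonedaEquiv_symm_naturality_left] at this }
  invFun φ :=
    { app j := yonedaEquiv (j.left.hom ≫ i.map j.hom ≫ φ)
      naturality j j' ψ := by
        have hw : ψ.left.right ≫ j'.hom = j.hom := CostructuredArrow.w ψ
        refine (homFunctor.map_comp_yonedaEquiv ψ.left.left _).trans
          ((congrArg yonedaEquiv ?_).trans (Category.comp_id _).symm)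
        rw [← Category.assoc, ψ.left.w, Category.assoc, ← i.map_comp_assoc, hw] }
  left_inv τ := by
    ext j
    refine Eq.trans ?_ (app_eq_app_ofElement τ j).symm
    change yonedaEquiv (j.left.hom ≫ i.map j.hom ≫ _) = _
    rw [← Category.assoc, yonedaEquiv_comp]
    change τ.app (ofElement i (yonedaEquiv.symm (yonedaEquiv _))) = _
    rw [Equiv.symm_apply_apply]
  right_inv φ := by
    ext c x
    change yonedaEquiv (yonedaEquiv.symm x ≫ i.map (𝟙 m) ≫ φ) = _
    rw [i.map_id, Category.id_comp, yonedaEquiv_comp, Equiv.apply_symm_apply]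
    rfl

theorem coconesEquiv_coconeAt_ι_comp {k : M ⥤ A}
    (η' : Comma.fst yoneda i ⋙ f ⟶ Comma.snd yoneda i ⋙ k) (m : M) (g : k.obj m ⟶ a) :
    coconesEquiv (((Functor.LeftExtension.mk k η').coconeAt m).ι ≫ (Functor.const _).map g) =
      (etaOf i f k η').app m ≫ (homFunctor f).map g := by
  ext c x
  let j : Comma yoneda i := ⟨c.unop, m, yonedaEquiv.symm x⟩
  change (η'.app j ≫ (Comma.snd yoneda i ⋙ k).map (𝟙 j)) ≫ g = η'.app j ≫ g
  rw [CategoryTheory.Functor.map_id, Category.comp_id]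

end YonedaComma

open YonedaComma in
/-- Let `C` be small, `i : M ⥤ (Cᵒᵖ ⥤ Type u)`, `f : C ⥤ A`,
`k : M ⥤ A`, and let `η' : p ⋙ f ⟶ q ⋙ k` be a 2-cell on the comma category
`y_C/i = Comma yoneda i`.  Then the associated 2-cell `η : i ⟶ k ⋙ A(f,1)` exhibits `k`
as an absolute left lifting of `i` along `A(f,1)` if and only if `η'` exhibits `k` as a
pointwise left Kan extension of `p ⋙ f` along `q`. -/
theorem stmt18 (i : M ⥤ Cᵒᵖ ⥤ Type u) (f : C ⥤ A) (k : M ⥤ A)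
    (η' : Comma.fst yoneda i ⋙ f ⟶ Comma.snd yoneda i ⋙ k) :
    ExhibitsAbsoluteLeftLifting.{ux, vx} i k (homFunctor f) (etaOf i f k η') ↔
      Nonempty (Functor.LeftExtension.mk k η').IsPointwiseLeftKanExtension := by
  rw [exhibitsAbsoluteLeftLifting_iff_bijective, Classical.nonempty_pi]
  refine forall_congr' fun m =>
    Iff.trans ?_ (Limits.Cocone.nonempty_isColimit_iff_bijective _).symm
  refine forall_congr' fun a => ?_
  rw [← coconesEquiv.bijective.of_comp_iff']
  exact Iff.of_eq (congrArg _ (funext fun g => (coconesEquiv_coconeAt_ι_comp η' m g).symm))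

end Statement18
end
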